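/- arXiv:1807.10302 — 4 statements merged into one kernel-verified Lean document; each statement's English description precedes it below -/
import Mathlib

section
/- Let G be a threshold graph on a finite vertex set, and let λ be an eigenvalue of the adjacency matrix of G satisfying (−1−√2)/2 ≤ λ ≤ (−1+√2)/2. Then λ = −1 or λ = 0. In other words, other than the trivial eigenvalues −1 and 0, the interval [(−1−√2)/2, (−1+√2)/2] contains no eigenvalue of any threshold graph. -/
/-- A graph is a threshold graph if adjacency is determined by vertex weights
exceeding a threshold. -/
def SimpleGraph.IsThreshold {V : Type*} (G : SimpleGraph V) : Prop :=
  ∃ (S : ℝ) (w : V → ℝ), ∀ u v : V, u ≠ v → (G.Adj u v ↔ S < w u + w v)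

/-- `μ` is an eigenvalue of the adjacency matrix of `G`. -/
def SimpleGraph.HasAdjEigenvalue {V : Type*} [Fintype V] (G : SimpleGraph V) (μ : ℝ) : Prop :=
  letI := Classical.decEq V
  letI : DecidableRel G.Adj := Classical.decRel _
  ∃ x : V → ℝ, x ≠ 0 ∧ (G.adjMatrix ℝ).mulVec x = μ • x

/-!
A threshold graph always has an isolated or a dominating vertex, so it can be dismantled one
vertex at a time. Fix `l ≠ 0` and solve `(l I - A) x = c 𝟙` along this dismantling: one finds
`l (c + ∑ x) = r c` for a number `r` depending only on the graph, starting from `r = l` for the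
empty graph, and adding an isolated vertex sends `r ↦ r + 1` while adding a dominating vertex
sends `1 / r ↦ 1 / r - 1 / (l (l + 1))`, which is possible as long as `r ≠ l (l + 1)`. If every
reachable `r` stays in a set avoiding this pole, then `c = 0` forces `x = 0`, so `l` is not an
eigenvalue. For `-1 < l < 0` the set `{l} ∪ [0, ∞)` works; for `l (l + 1) > 0` the set
`{l} ∪ [p, 0] ∪ [p + 1, ∞)` works, where `p` is the larger root of `p² + p + l (l + 1) = 0`,
which is real exactly when `(2 l + 1)² ≤ 2`.
-/

open Finset

structure IsPeelingInvariant (l : ℝ) (R : Set ℝ) : Prop where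
  self_mem : l ∈ R
  add_one_mem : ∀ r ∈ R, r + 1 ∈ R
  ne_of_mem : ∀ r ∈ R, r ≠ l * (l + 1)
  dominating_mem : ∀ r ∈ R, l * (l + 1) * r / (l * (l + 1) - r) ∈ R

namespace IsPeelingInvariant

variable {l p : ℝ}

theorem ne_zero {R : Set ℝ} (hR : IsPeelingInvariant l R) : l ≠ 0 := by
  rintro rfl
  exact hR.ne_of_mem 0 hR.self_mem (by ring)

theorem dominating_self (hl : l ≠ 0) : l * (l + 1) * l / (l * (l + 1) - l) = l + 1 := by
  rw [show l * (l + 1) - l = l * l by ring]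
  field_simp

theorem of_mul_add_one_neg (hk : l * (l + 1) < 0) :
    IsPeelingInvariant l {r | r = l ∨ 0 ≤ r} where
  self_mem := Or.inl rfl
  add_one_mem := by
    rintro r (rfl | hr)
    · exact Or.inr (by nlinarith)
    · exact Or.inr (by linarith)
  ne_of_mem := by
    rintro r (rfl | hr)
    · nlinarith
    · linarith
  dominating_mem := by
    rintro r (rfl | hr)
    · rw [dominating_self (by rintro rfl; simp at hk)]
      exact Or.inr (by nlinarith)
    · exact Or.inr (div_nonneg_of_nonpos (mul_nonpos_of_nonpos_of_nonneg hk.le hr) (by linarith))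

/-- A dominating vertex sends `p + 1` back to `p`: the two moves have the 2-cycle `p ↔ p + 1`. -/
theorem of_sq_add_add_eq_zero (hk : 0 < l * (l + 1)) (hp : p ^ 2 + p + l * (l + 1) = 0)
    (hp_ge : -1 / 2 ≤ p) (hp_le : p ≤ l + 1) :
    IsPeelingInvariant l {r | r = l ∨ p ≤ r ∧ r ≤ 0 ∨ p + 1 ≤ r} := by
  have hl : l ≠ 0 := by rintro rfl; simp at hk
  have hp0 : p ≤ 0 := by nlinarith
  have hself : l + 1 ∈ {r | r = l ∨ p ≤ r ∧ r ≤ 0 ∨ p + 1 ≤ r} := by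
    rcases le_or_gt (l + 1) 0 with h | h
    · exact Or.inr (Or.inl ⟨hp_le, h⟩)
    · have : 0 < l := by nlinarith
      exact Or.inr (Or.inr (by linarith))
  refine ⟨Or.inl rfl, ?_, ?_, ?_⟩
  · rintro r (rfl | ⟨_, hr⟩ | hr)
    · exact hself
    · exact Or.inr (Or.inr (by linarith))
    · exact Or.inr (Or.inr (by linarith))
  · rintro r (rfl | ⟨_, hr⟩ | hr)
    · intro h; apply hl; nlinarith
    · linarith
    · nlinarith
  · rintro r (rfl | ⟨hpr, hr⟩ | hr)
    · rwa [dominating_self hl]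
    · refine Or.inr (Or.inl ⟨?_, ?_⟩)
      · rw [le_div_iff₀ (by linarith)]
        nlinarith
      · exact div_nonpos_of_nonpos_of_nonneg (mul_nonpos_of_nonneg_of_nonpos hk.le hr)
          (by linarith)
    · have hkr : l * (l + 1) - r < 0 := by nlinarith
      refine Or.inr (Or.inl ⟨?_, ?_⟩)
      · rw [le_div_iff_of_neg hkr]
        nlinarith
      · exact div_nonpos_of_nonneg_of_nonpos (by nlinarith) hkr.le

end IsPeelingInvariant

theorem exists_isPeelingInvariant {l : ℝ} (h0 : l ≠ 0) (h1 : l ≠ -1)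
    (h : (2 * l + 1) ^ 2 ≤ 2) : ∃ R, IsPeelingInvariant l R := by
  rcases lt_trichotomy (l * (l + 1)) 0 with hk | hk | hk
  · exact ⟨_, .of_mul_add_one_neg hk⟩
  · rcases mul_eq_zero.1 hk with h | h
    exacts [absurd h h0, absurd (eq_neg_of_add_eq_zero_left h) h1]
  · set q := √(2 - (2 * l + 1) ^ 2)
    have hq : q ^ 2 = 2 - (2 * l + 1) ^ 2 := Real.sq_sqrt (by linarith)
    refine ⟨_, .of_sq_add_add_eq_zero (p := (q - 1) / 2) hk (by linear_combination hq / 4)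
      (by linarith [Real.sqrt_nonneg (2 - (2 * l + 1) ^ 2)]) ?_⟩
    have hq_le : q ≤ 2 * l + 3 := Real.sqrt_le_iff.2 ⟨by nlinarith, by nlinarith⟩
    linarith

namespace SimpleGraph

variable {V : Type*} {G : SimpleGraph V}

theorem IsThreshold.exists_isolated_or_dominating (hG : G.IsThreshold) {s : Finset V}
    (hs : s.Nonempty) :
    ∃ v ∈ s, (∀ u ∈ s, ¬G.Adj u v) ∨ ∀ u ∈ s, u ≠ v → G.Adj u v := by
  obtain ⟨S, w, hw⟩ := hG
  obtain ⟨vmin, hvmin, hmin⟩ := s.exists_min_image w hs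
  by_cases hiso : ∀ u ∈ s, ¬G.Adj u vmin
  · exact ⟨vmin, hvmin, Or.inl hiso⟩
  push Not at hiso
  obtain ⟨z, hz, hzmin⟩ := hiso
  obtain ⟨vmax, hvmax, hmax⟩ := s.exists_max_image w hs
  refine ⟨vmax, hvmax, Or.inr fun u hu huv => (hw u vmax huv).2 ?_⟩
  have := (hw z vmin hzmin.ne).1 hzmin
  linarith [hmin u hu, hmax z hz]

/-- `x` solves `(l I - A) x = c 𝟙` on `s`, where `A` is the adjacency matrix of the subgraph
induced on `s`. -/
def SolvesResolventEq (G : SimpleGraph V) [DecidableRel G.Adj] (s : Finset V) (l c : ℝ)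
    (x : V → ℝ) : Prop :=
  ∀ u ∈ s, l * x u - ∑ w ∈ s with G.Adj u w, x w = c

section Peeling

variable [DecidableEq V] [DecidableRel G.Adj] {s : Finset V} {l c : ℝ} {x : V → ℝ} {v : V}

theorem SolvesResolventEq.erase_isolated (hx : G.SolvesResolventEq s l c x) (hv : v ∈ s)
    (hiso : ∀ u ∈ s, ¬G.Adj u v) :
    l * x v = c ∧ G.SolvesResolventEq (s.erase v) l c x := by
  refine ⟨?_, fun u hu => ?_⟩
  · have hrow := hx v hv
    rwa [filter_false_of_mem fun w hw hvw => hiso w hw hvw.symm, sum_empty, sub_zero] at hrow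
  · rw [filter_erase, erase_eq_of_notMem fun h => hiso u (mem_of_mem_erase hu) (mem_filter.1 h).2]
    exact hx u (mem_of_mem_erase hu)

theorem SolvesResolventEq.erase_dominating (hx : G.SolvesResolventEq s l c x) (hv : v ∈ s)
    (hdom : ∀ u ∈ s, u ≠ v → G.Adj u v) :
    l * x v - ∑ w ∈ s.erase v, x w = c ∧ G.SolvesResolventEq (s.erase v) l (c + x v) x := by
  refine ⟨?_, fun u hu => ?_⟩
  · have hnbr : {w ∈ s | G.Adj v w} = s.erase v := by
      ext w
      simp only [mem_filter, mem_erase]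
      exact ⟨fun h => ⟨h.2.ne.symm, h.1⟩, fun h => ⟨h.2, (hdom w h.2 h.1).symm⟩⟩
    rw [← hnbr]
    exact hx v hv
  · obtain ⟨huv, hus⟩ := mem_erase.1 hu
    have hnbr : {w ∈ s | G.Adj u w} = insert v {w ∈ s.erase v | G.Adj u w} := by
      rw [filter_erase, insert_erase (mem_filter.2 ⟨hv, hdom u hus huv⟩)]
    have hrow := hx u hus
    rw [hnbr, sum_insert (by simp)] at hrow
    linarith

theorem IsThreshold.exists_mem_peelingInvariant (hG : G.IsThreshold) {l : ℝ} {R : Set ℝ}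
    (hR : IsPeelingInvariant l R) (s : Finset V) :
    ∃ r ∈ R, ∀ c x, G.SolvesResolventEq s l c x →
      l * (c + ∑ w ∈ s, x w) = r * c ∧ (c = 0 → ∀ w ∈ s, x w = 0) := by
  induction s using Finset.strongInduction with
  | H s ih =>
  rcases s.eq_empty_or_nonempty with rfl | hs
  · exact ⟨l, hR.self_mem, fun c x _ => ⟨by simp, by simp⟩⟩
  obtain ⟨v, hv, hiso | hdom⟩ := hG.exists_isolated_or_dominating hs
  · obtain ⟨r, hr, hrec⟩ := ih _ (erase_ssubset hv)
    refine ⟨r + 1, hR.add_one_mem r hr, fun c x hx => ?_⟩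
    obtain ⟨hxv, hx'⟩ := hx.erase_isolated hv hiso
    obtain ⟨hsum, hzero⟩ := hrec c x hx'
    refine ⟨by rw [← add_sum_erase s x hv]; linear_combination hsum + hxv, fun hc => ?_⟩
    rw [← insert_erase hv, forall_mem_insert]
    exact ⟨(mul_eq_zero.1 (hxv.trans hc)).resolve_left hR.ne_zero, hzero hc⟩
  · obtain ⟨r, hr, hrec⟩ := ih _ (erase_ssubset hv)
    have hrk := hR.ne_of_mem r hr
    refine ⟨_, hR.dominating_mem r hr, fun c x hx => ?_⟩
    obtain ⟨hxv, hx'⟩ := hx.erase_dominating hv hdom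
    obtain ⟨hsum, hzero⟩ := hrec (c + x v) x hx'
    have hkr : l * (l + 1) - r ≠ 0 := sub_ne_zero.2 hrk.symm
    have hv_eq : (l * (l + 1) - r) * x v = r * c := by linear_combination hsum + l * hxv
    refine ⟨?_, fun hc => ?_⟩
    · rw [← add_sum_erase s x hv]
      field_simp
      linear_combination (l * (l + 1) - r) * hsum + r * hv_eq
    · have hxv0 : x v = 0 := by
        simpa [hc, hkr] using hv_eq
      rw [← insert_erase hv, forall_mem_insert]
      exact ⟨hxv0, hzero (by rw [hc, hxv0, add_zero])⟩

end Peeling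

theorem IsThreshold.eq_zero_of_adjMatrix_mulVec_eq_smul [Fintype V] [DecidableRel G.Adj]
    (hG : G.IsThreshold) {μ : ℝ} {R : Set ℝ} (hR : IsPeelingInvariant μ R) {x : V → ℝ}
    (hx : (G.adjMatrix ℝ).mulVec x = μ • x) : x = 0 := by
  classical
  obtain ⟨r, -, hr⟩ := hG.exists_mem_peelingInvariant hR univ
  have hsolves : G.SolvesResolventEq univ μ 0 x := fun u _ => by
    have hu := congrFun hx u
    rw [adjMatrix_mulVec_apply, neighborFinset_eq_filter, Pi.smul_apply, smul_eq_mul] at hu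
    rw [← hu, sub_self]
  exact funext fun w => (hr 0 x hsolves).2 rfl w (mem_univ w)

end SimpleGraph

theorem threshold_eigenvalue_interval_trivial {V : Type*} [Fintype V] (G : SimpleGraph V)
    (hG : G.IsThreshold) (μ : ℝ) (hμ : G.HasAdjEigenvalue μ)
    (h₁ : (-1 - Real.sqrt 2) / 2 ≤ μ) (h₂ : μ ≤ (-1 + Real.sqrt 2) / 2) :
    μ = -1 ∨ μ = 0 := by
  classical
  by_contra! hμ_ne
  have hμ_sq : (2 * μ + 1) ^ 2 ≤ 2 :=
    (sq_le_sq' (by linarith) (by linarith)).trans_eq (Real.sq_sqrt zero_le_two)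
  obtain ⟨R, hR⟩ := exists_isPeelingInvariant hμ_ne.2 hμ_ne.1 hμ_sq
  obtain ⟨x, hx_ne, hx⟩ := hμ
  exact hx_ne (hG.eq_zero_of_adjMatrix_mulVec_eq_smul hR hx)
end

section
/- Let h ≥ 1 and let m_1,…,m_h, n_1,…,n_h be positive integers, and let G = NSG(m_1,…,m_h; n_1,…,n_h). Then the multiplicity of 0 as an eigenvalue of the adjacency matrix of G equals Σ_{i=1}^{h} (m_i − 1). -/
/-- The multiplicity of `μ` as an eigenvalue of `G`: the dimension of
the kernel of `A(G) - μ I`. -/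
noncomputable def SimpleGraph.eigMult {V : Type*} [Fintype V] (G : SimpleGraph V) (μ : ℝ) : ℕ :=
  letI := Classical.decEq V
  letI : DecidableRel G.Adj := Classical.decRel _
  Module.finrank ℝ (LinearMap.ker (Matrix.toLin' (G.adjMatrix ℝ - μ • (1 : Matrix V V ℝ))))

/-- The nested split graph `NSG(m₁,…,m_h; n₁,…,n_h)`: the vertex set is the disjoint union
of `U₁,…,U_h, V₁,…,V_h` with `|Uᵢ| = mᵢ`, `|Vᵢ| = nᵢ`; the `Vᵢ`'s form a clique,
the `Uᵢ`'s form an independent set, and a vertex of `Uᵢ` is adjacent to a vertex of `Vⱼ`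
iff `j ≤ i`. -/
def NSG (h : ℕ) (m n : Fin h → ℕ) :
    SimpleGraph ((Σ i : Fin h, Fin (m i)) ⊕ (Σ i : Fin h, Fin (n i))) where
  Adj x y :=
    match x, y with
    | Sum.inl _, Sum.inl _ => False
    | Sum.inl ⟨i, _⟩, Sum.inr ⟨j, _⟩ => j ≤ i
    | Sum.inr ⟨j, _⟩, Sum.inl ⟨i, _⟩ => j ≤ i
    | Sum.inr a, Sum.inr b => a ≠ b
  symm := by
    constructor
    rintro (⟨i, a⟩ | ⟨i, a⟩) (⟨j, b⟩ | ⟨j, b⟩) hadj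
    · exact hadj
    · exact hadj
    · exact hadj
    · exact Ne.symm hadj
  loopless := by
    constructor
    rintro (⟨i, a⟩ | ⟨i, a⟩) hadj
    · exact hadj
    · exact hadj rfl

/-! The equation `(A f)(u) = 0` at a vertex `u ∈ U_i` says that the partial sums
`∑_{j ≤ i} ∑_{V_j} f` vanish, so `f` sums to zero on every `V_j`. The equation at
`v ∈ V_j` then reads `f v = ∑_{i ≥ j} ∑_{U_i} f`; summing it over the `n_j ≥ 1` vertices
of `V_j` forces these tail sums to vanish, hence `f = 0` on the clique and `∑_{U_i} f = 0`
for every `i`. Conversely these conditions give `A f = 0`, and since every `U_i` is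
nonempty they are `|V| + h` independent linear conditions, leaving a kernel of dimension
`∑ m_i - h`. -/

open Finset Matrix

theorem Finset.eq_zero_of_sum_Iic_eq_zero {α M : Type*} [PartialOrder α]
    [LocallyFiniteOrderBot α] [WellFoundedLT α] [AddCommMonoid M] {g : α → M}
    (hg : ∀ i, ∑ j ∈ Iic i, g j = 0) (i : α) : g i = 0 := by
  induction i using WellFoundedLT.induction with
  | _ i ih =>
    have := hg i
    rwa [Iic_eq_cons_Iio, sum_cons, sum_eq_zero fun j hj => ih j (mem_Iio.mp hj),
      add_zero] at this

theorem Finset.eq_zero_of_sum_Ici_eq_zero {α M : Type*} [PartialOrder α]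
    [LocallyFiniteOrderTop α] [WellFoundedGT α] [AddCommMonoid M] {g : α → M}
    (hg : ∀ i, ∑ j ∈ Ici i, g j = 0) (i : α) : g i = 0 :=
  eq_zero_of_sum_Iic_eq_zero (α := αᵒᵈ) hg i

namespace NSG

variable {h : ℕ} {m n : Fin h → ℕ}

@[simp] theorem adj_inl_inl (x y : Σ i : Fin h, Fin (m i)) :
    ¬(NSG h m n).Adj (.inl x) (.inl y) := id

@[simp] theorem adj_inl_inr {i j : Fin h} (a : Fin (m i)) (b : Fin (n j)) :
    (NSG h m n).Adj (.inl ⟨i, a⟩) (.inr ⟨j, b⟩) ↔ j ≤ i := .rfl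

@[simp] theorem adj_inr_inl {i j : Fin h} (a : Fin (m i)) (b : Fin (n j)) :
    (NSG h m n).Adj (.inr ⟨j, b⟩) (.inl ⟨i, a⟩) ↔ j ≤ i := .rfl

@[simp] theorem adj_inr_inr (x y : Σ i : Fin h, Fin (n i)) :
    (NSG h m n).Adj (.inr x) (.inr y) ↔ x ≠ y := .rfl

variable (h m n) in
def valuesOnVSumsOnU :
    ((Σ i : Fin h, Fin (m i)) ⊕ (Σ i : Fin h, Fin (n i)) → ℝ) →ₗ[ℝ]
      ((Σ i : Fin h, Fin (n i)) → ℝ) × (Fin h → ℝ) where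
  toFun f := (fun q => f (.inr q), fun i => ∑ a, f (.inl ⟨i, a⟩))
  map_add' f g := by ext <;> simp [sum_add_distrib]
  map_smul' c f := by ext <;> simp [mul_sum]

theorem valuesOnVSumsOnU_surjective (hm : ∀ i, 1 ≤ m i) :
    Function.Surjective (valuesOnVSumsOnU h m n) := by
  rintro ⟨g, c⟩
  refine ⟨Sum.elim (fun p => c p.1 / m p.1) g, ?_⟩
  ext i
  · rfl
  · have hmi : (m i : ℝ) ≠ 0 := Nat.cast_ne_zero.2 (by grind)
    simp [valuesOnVSumsOnU, mul_div_cancel₀ _ hmi]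

variable [DecidableRel (NSG h m n).Adj]
  (f : (Σ i : Fin h, Fin (m i)) ⊕ (Σ i : Fin h, Fin (n i)) → ℝ)

theorem adjMatrix_mulVec_inl (i : Fin h) (a : Fin (m i)) :
    ((NSG h m n).adjMatrix ℝ *ᵥ f) (.inl ⟨i, a⟩) =
      ∑ j ∈ Iic i, ∑ b, f (.inr ⟨j, b⟩) := by
  simp only [mulVec, dotProduct, Fintype.sum_sum_type, Fintype.sum_sigma,
    SimpleGraph.adjMatrix_apply]
  simp [← sum_filter, filter_ge_eq_Iic]

theorem adjMatrix_mulVec_inr (j : Fin h) (b : Fin (n j)) :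
    ((NSG h m n).adjMatrix ℝ *ᵥ f) (.inr ⟨j, b⟩) + f (.inr ⟨j, b⟩) =
      ∑ i ∈ Ici j, ∑ a, f (.inl ⟨i, a⟩) + ∑ q, f (.inr q) := by
  simp only [mulVec, dotProduct, Fintype.sum_sum_type, SimpleGraph.adjMatrix_apply]
  rw [Fintype.sum_sigma]
  simp [← sum_filter, filter_le_eq_Ici, add_assoc, sum_ite, filter_not, filter_eq]

theorem adjMatrix_mulVec_eq_zero_iff (hm : ∀ i, 1 ≤ m i) (hn : ∀ i, 1 ≤ n i) :
    (NSG h m n).adjMatrix ℝ *ᵥ f = 0 ↔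
      (∀ q, f (.inr q) = 0) ∧ ∀ i, ∑ a, f (.inl ⟨i, a⟩) = 0 := by
  constructor
  · intro hf
    have hV : ∀ j, ∑ b, f (.inr ⟨j, b⟩) = 0 :=
      eq_zero_of_sum_Iic_eq_zero fun i => by
        rw [← adjMatrix_mulVec_inl f i ⟨0, hm i⟩, hf, Pi.zero_apply]
    have hV_total : ∑ q, f (.inr q) = 0 := by simp [Fintype.sum_sigma, hV]
    have hf_inr : ∀ j b, f (.inr ⟨j, b⟩) = ∑ i ∈ Ici j, ∑ a, f (.inl ⟨i, a⟩) := by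
      intro j b
      simpa [hf, hV_total, -SimpleGraph.adjMatrix_mulVec_apply] using adjMatrix_mulVec_inr f j b
    have hU_tail : ∀ j, ∑ i ∈ Ici j, ∑ a, f (.inl ⟨i, a⟩) = 0 := by
      intro j
      have : (n j : ℝ) * ∑ i ∈ Ici j, ∑ a, f (.inl ⟨i, a⟩) = 0 := by
        simpa [hf_inr j] using hV j
      exact (mul_eq_zero.1 this).resolve_left (Nat.cast_ne_zero.2 (by grind))
    exact ⟨fun ⟨j, b⟩ => (hf_inr j b).trans (hU_tail j), eq_zero_of_sum_Ici_eq_zero hU_tail⟩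
  · rintro ⟨hV, hU⟩
    ext (⟨i, a⟩ | ⟨j, b⟩)
    · simp [adjMatrix_mulVec_inl, hV, -SimpleGraph.adjMatrix_mulVec_apply]
    · simpa [hV, hU, -SimpleGraph.adjMatrix_mulVec_apply] using adjMatrix_mulVec_inr f j b

theorem ker_toLin'_adjMatrix (hm : ∀ i, 1 ≤ m i) (hn : ∀ i, 1 ≤ n i) :
    LinearMap.ker (toLin' ((NSG h m n).adjMatrix ℝ)) =
      LinearMap.ker (valuesOnVSumsOnU h m n) := by
  ext f
  simp [adjMatrix_mulVec_eq_zero_iff f hm hn, valuesOnVSumsOnU, Prod.ext_iff, funext_iff]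

theorem finrank_ker_toLin'_adjMatrix (hm : ∀ i, 1 ≤ m i) (hn : ∀ i, 1 ≤ n i) :
    Module.finrank ℝ (LinearMap.ker (toLin' ((NSG h m n).adjMatrix ℝ))) = ∑ i, (m i - 1) := by
  have rank_nullity := LinearMap.finrank_range_add_finrank_ker (valuesOnVSumsOnU h m n)
  rw [LinearMap.range_eq_top.2 (valuesOnVSumsOnU_surjective hm), finrank_top] at rank_nullity
  have hm_sum : ∑ i, m i = ∑ i, (m i - 1) + h := calc
    ∑ i, m i = ∑ i, ((m i - 1) + 1) := sum_congr rfl fun i _ => by grind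
    _ = ∑ i, (m i - 1) + h := by simp [sum_add_distrib]
  rw [ker_toLin'_adjMatrix hm hn]
  simp [Module.finrank_prod, Fintype.card_sigma] at rank_nullity
  omega

end NSG

theorem SimpleGraph.eigMult_zero {V : Type*} [Fintype V] [DecidableEq V] (G : SimpleGraph V)
    [DecidableRel G.Adj] :
    G.eigMult 0 = Module.finrank ℝ (LinearMap.ker (toLin' (G.adjMatrix ℝ))) := by
  rw [eigMult, zero_smul, sub_zero]
  congr!

theorem nsg_mult_zero_general (h : ℕ) (m n : Fin h → ℕ)
    (hm : ∀ i, 1 ≤ m i) (hn : ∀ i, 1 ≤ n i) :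
    (NSG h m n).eigMult 0 = ∑ i : Fin h, (m i - 1) := by
  classical
  rw [SimpleGraph.eigMult_zero, NSG.finrank_ker_toLin'_adjMatrix hm hn]

theorem nsg_mult_zero (h : ℕ) (hh : 1 ≤ h) (m n : Fin h → ℕ)
    (hm : ∀ i, 1 ≤ m i) (hn : ∀ i, 1 ≤ n i) :
    (NSG h m n).eigMult 0 = ∑ i : Fin h, (m i - 1) :=
  nsg_mult_zero_general h m n hm hn
end

section
/- Let G be a threshold graph with at least one vertex that is not an anti-regular graph. Then there exists a vertex v of G such that, writing H = G − v (the induced subgraph on the remaining vertices), either (i) mult(0, G) = mult(0, H) + 1 and mult(−1, G) = mult(−1, H), or (ii) mult(0, G) = mult(0, H) and mult(−1, G) = mult(−1, H) + 1. -/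
open Finset
set_option linter.unusedSectionVars false
set_option maxHeartbeats 1600000


/-- A graph on at least two vertices is anti-regular if exactly one unordered pair
of distinct vertices has equal degrees. -/
def SimpleGraph.IsAntiRegular {V : Type*} [Fintype V] (G : SimpleGraph V) : Prop :=
  letI := Classical.decEq V
  letI : DecidableRel G.Adj := Classical.decRel _
  2 ≤ Fintype.card V ∧ ∃ u v : V, u ≠ v ∧ G.degree u = G.degree v ∧
    ∀ a b : V, a ≠ b → G.degree a = G.degree b → ({a, b} : Set V) = {u, v}

section Core
variable {V : Type*} [Fintype V] [DecidableEq V]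

/-- partition helper -/
lemma filter_compl_sum (R : V → V → Prop) [DecidableRel R] (hirr : ∀ a, ¬ R a a)
    (s : Finset V) (a : V) (ha : a ∈ s) (x : V → ℝ) :
    ∑ z ∈ s.filter (fun z => a ≠ z ∧ ¬ R a z), x z
      = (∑ z ∈ s, x z - x a) - ∑ z ∈ s.filter (fun z => R a z), x z := by
  have h1 : s.filter (fun z => a ≠ z ∧ ¬ R a z)
      = (s.erase a).filter (fun z => ¬ R a z) := by
    ext z; simp only [mem_filter, mem_erase]
    constructor
    · rintro ⟨hz, hne, hnr⟩; exact ⟨⟨fun h => hne h.symm, hz⟩, hnr⟩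
    · rintro ⟨⟨hne, hz⟩, hnr⟩; exact ⟨hz, fun h => hne h.symm, hnr⟩
  have h2 : (s.erase a).filter (fun z => R a z) = s.filter (fun z => R a z) := by
    ext z; simp only [mem_filter, mem_erase]
    exact ⟨fun h => ⟨h.1.2, h.2⟩, fun h => ⟨⟨fun he => hirr a (he ▸ h.2), h.1⟩, h.2⟩⟩
  have h3 := Finset.sum_filter_add_sum_filter_not (s.erase a) (fun z => R a z) x
  rw [h2] at h3
  rw [h1]
  have h4 : ∑ z ∈ s.erase a, x z = ∑ z ∈ s, x z - x a := Finset.sum_erase_eq_sub ha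
  linarith [h3, h4]

variable (wt : V → ℝ) (R : V → V → Prop) [DecidableRel R]
variable (hsym : ∀ a b, R a b → R b a) (hirr : ∀ a, ¬ R a a)
variable (hmono : ∀ a b c, wt a ≤ wt b → c ≠ b → R c a → R c b)

include hsym hirr hmono in
/-- no isolated vertex in `s` implies the max-weight vertex dominates `s`. -/
lemma core_dom (s : Finset V) (hne : s.Nonempty)
    (hniso : ∀ t ∈ s, ∃ z ∈ s, R t z) :
    ∃ m ∈ s, ∀ a ∈ s, a ≠ m → R a m := by
  obtain ⟨m, hm, hmax⟩ := s.exists_max_image wt hne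
  refine ⟨m, hm, fun a ha hne' => ?_⟩
  obtain ⟨z, hz, hrz⟩ := hniso a ha
  exact hmono z m a (hmax z hz) hne' hrz

include hsym hirr hmono in
/-- A-system with constants `(k+1)c` and total sum `k c` forces `c = 0`. -/
lemma core_LC : ∀ n (s : Finset V), s.card = n → s.Nonempty →
    ∀ (x : V → ℝ) (c : ℝ) (k : ℕ),
    (∀ a ∈ s, ∑ z ∈ s.filter (fun z => R a z), x z = ((k : ℝ) + 1) * c) →
    (∑ z ∈ s, x z = (k : ℝ) * c) → c = 0 := by
  intro n
  induction n using Nat.strong_induction_on with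
  | _ n ih =>
    intro s hcard hne x c k hrow hsum
    by_cases hiso : ∃ t ∈ s, ∀ z ∈ s, ¬ R t z
    · obtain ⟨t, ht, hti⟩ := hiso
      have hf : s.filter (fun z => R t z) = ∅ := by
        rw [Finset.filter_eq_empty_iff]; exact fun {z} hz => hti z hz
      have := hrow t ht
      rw [hf, Finset.sum_empty] at this
      have hk : ((k : ℝ) + 1) ≠ 0 := by positivity
      replace this := mul_eq_zero.mp this.symm
      rcases this with h | h
      · exact absurd h hk
      · exact h
    · push_neg at hiso
      obtain ⟨m, hm, hdom⟩ := core_dom wt R hsym hirr hmono s hne hiso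
      have hfm : s.filter (fun z => R m z) = s.erase m := by
        ext z; simp only [mem_filter, mem_erase]
        exact ⟨fun h => ⟨fun he => hirr m (he ▸ h.2), h.1⟩,
          fun h => ⟨h.2, hsym z m (hdom z h.2 h.1)⟩⟩
      have hxm : x m = -c := by
        have := hrow m hm
        rw [hfm, Finset.sum_erase_eq_sub hm, hsum] at this
        linarith
      obtain ⟨z1, hz1, hrz1⟩ := hiso m hm
      have hz1m : z1 ≠ m := fun h => hirr m (h ▸ hrz1)
      have hne' : (s.erase m).Nonempty := ⟨z1, Finset.mem_erase.mpr ⟨hz1m, hz1⟩⟩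
      have hcard' : (s.erase m).card = n - 1 := by rw [Finset.card_erase_of_mem hm, hcard]
      have hnpos : 0 < n := hcard ▸ Finset.card_pos.mpr hne
      refine ih (n-1) (by omega) (s.erase m) hcard' hne' x c (k+1) ?_ ?_
      · intro a ha
        obtain ⟨ham, has⟩ := Finset.mem_erase.mp ha
        have hfe : (s.erase m).filter (fun z => R a z)
            = (s.filter (fun z => R a z)).erase m := by
          ext z; simp only [mem_filter, mem_erase]; tauto
        have hmf : m ∈ s.filter (fun z => R a z) :=
          Finset.mem_filter.mpr ⟨hm, hdom a has ham⟩
        rw [hfe, Finset.sum_erase_eq_sub hmf, hrow a has, hxm]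
        push_cast; ring
      · rw [Finset.sum_erase_eq_sub hm, hsum, hxm]; push_cast; ring
end Core


section Core2
set_option linter.unusedSectionVars false
variable {V : Type*} [Fintype V] [DecidableEq V]
variable (wt : V → ℝ) (R : V → V → Prop) [DecidableRel R]
variable (hsym : ∀ a b, R a b → R b a) (hirr : ∀ a, ¬ R a a)
variable (hmono : ∀ a b c, wt a ≤ wt b → c ≠ b → R c a → R c b)

include hsym hirr hmono in
lemma core_dom2 (s : Finset V) (hne : s.Nonempty)
    (hniso : ∀ t ∈ s, ∃ z ∈ s, R t z) :
    ∃ m ∈ s, ∀ a ∈ s, a ≠ m → R a m := by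
  obtain ⟨m, hm, hmax⟩ := s.exists_max_image wt hne
  refine ⟨m, hm, fun a ha hne' => ?_⟩
  obtain ⟨z, hz, hrz⟩ := hniso a ha
  exact hmono z m a (hmax z hz) hne' hrz

include hsym hirr hmono in
/-- kernel-vanishing for the A-system (eigenvalue 0 side). -/
lemma core_L : ∀ n (s : Finset V), s.card = n → ∀ u z0, u ∈ s → z0 ∈ s →
    R z0 u → (∀ z ∈ s, z ≠ u → R z z0 → R z u) →
    ((∀ x : V → ℝ, (∀ a ∈ s, ∑ z ∈ s.filter (fun z => R a z), x z = 0) → x u = 0) ∧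
     (∀ (x : V → ℝ) (c : ℝ) (k : ℕ),
        (∀ a ∈ s, ∑ z ∈ s.filter (fun z => R a z), x z = ((k : ℝ) + 1) * c) →
        (∑ z ∈ s, x z = (k : ℝ) * c) → x u = 0)) := by
  intro n
  induction n using Nat.strong_induction_on with
  | _ n ih =>
    intro s hcard u z0 hu hz0 hr hsub
    have hz0u : z0 ≠ u := fun h => hirr u (h ▸ hr)
    have hnpos : 0 < n := hcard ▸ Finset.card_pos.mpr ⟨u, hu⟩
    have hz0dom : (∀ a ∈ s, a ≠ z0 → R a z0) → (∀ z ∈ s, z ≠ u → R z u) := by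
      intro hd z hz hzu
      by_cases hzz0 : z = z0
      · exact hzz0 ▸ hr
      · exact hsub z hz hzu (hd z hz hzz0)
    have hfil : ∀ m ∈ s, (∀ a ∈ s, a ≠ m → R a m) →
        s.filter (fun z => R m z) = s.erase m := by
      intro m hm hdom
      ext z; simp only [mem_filter, mem_erase]
      exact ⟨fun h => ⟨fun he => hirr m (he ▸ h.2), h.1⟩,
        fun h => ⟨h.2, hsym z m (hdom z h.2 h.1)⟩⟩
    -- peel identity: removing a vertex `t` not adjacent into sums
    have hpeel : ∀ t, ∀ a ∈ s.erase t, R a t →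
        (s.erase t).filter (fun z => R a z) = (s.filter (fun z => R a z)).erase t := by
      intro t a _ _
      ext z; simp only [mem_filter, mem_erase]; tauto
    have hpeel0 : ∀ t ∈ s, (∀ z ∈ s, ¬ R t z) → ∀ a ∈ s.erase t,
        (s.erase t).filter (fun z => R a z) = s.filter (fun z => R a z) := by
      intro t ht hti a ha
      obtain ⟨hat, has⟩ := Finset.mem_erase.mp ha
      ext z; simp only [mem_filter, mem_erase]
      refine ⟨fun h => ⟨h.1.2, h.2⟩, fun h => ⟨⟨?_, h.1⟩, h.2⟩⟩
      rintro rfl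
      exact hti a has (hsym a _ h.2)
    have P1 : (∀ x : V → ℝ, (∀ a ∈ s, ∑ z ∈ s.filter (fun z => R a z), x z = 0) → x u = 0) := by
      intro x hrow
      by_cases hiso : ∃ t ∈ s, ∀ z ∈ s, ¬ R t z
      · obtain ⟨t, ht, hti⟩ := hiso
        have htu : t ≠ u := by rintro rfl; exact hti z0 hz0 (hsym z0 t hr)
        have htz0 : t ≠ z0 := by rintro rfl; exact hti u hu hr
        have hcard' : (s.erase t).card = n - 1 := by rw [Finset.card_erase_of_mem ht, hcard]
        refine (ih (n-1) (by omega) (s.erase t) hcard' u z0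
          (Finset.mem_erase.mpr ⟨fun h => htu h.symm, hu⟩)
          (Finset.mem_erase.mpr ⟨fun h => htz0 h.symm, hz0⟩) hr
          (fun z hz => hsub z (Finset.mem_erase.mp hz).2)).1 x ?_
        intro a ha
        rw [hpeel0 t ht hti a ha]
        exact hrow a (Finset.mem_erase.mp ha).2
      · push_neg at hiso
        obtain ⟨m, hm, hdom⟩ := core_dom2 wt R hsym hirr hmono s ⟨u, hu⟩ hiso
        by_cases hud : ∀ z ∈ s, z ≠ u → R z u
        · have hfu : s.filter (fun z => R u z) = s.erase u := hfil u hu hud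
          have hrowu := hrow u hu
          rw [hfu] at hrowu
          have hneu : (s.erase u).Nonempty := ⟨z0, Finset.mem_erase.mpr ⟨hz0u, hz0⟩⟩
          have hrows' : ∀ a ∈ s.erase u,
              ∑ z ∈ (s.erase u).filter (fun z => R a z), x z = ((0:ℕ) + 1 : ℝ) * (-(x u)) := by
            intro a ha
            obtain ⟨hau, has⟩ := Finset.mem_erase.mp ha
            have huf : u ∈ s.filter (fun z => R a z) :=
              Finset.mem_filter.mpr ⟨hu, hud a has hau⟩
            rw [hpeel u a ha (hud a has hau), Finset.sum_erase_eq_sub huf,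
              hrow a has]
            push_cast; ring
          have hsum' : ∑ z ∈ s.erase u, x z = ((0:ℕ) : ℝ) * (-(x u)) := by
            rw [hrowu]; push_cast; ring
          have hc0 := core_LC wt R hsym hirr hmono (s.erase u).card (s.erase u) rfl hneu
            x (-(x u)) 0 hrows' hsum'
          linarith
        · have hmu : m ≠ u := by rintro rfl; exact hud (fun z hz hzu => hdom z hz hzu)
          have hmz0 : m ≠ z0 := by rintro rfl; exact hud (hz0dom hdom)
          have hcard' : (s.erase m).card = n - 1 := by rw [Finset.card_erase_of_mem hm, hcard]
          have hfm : s.filter (fun z => R m z) = s.erase m := hfil m hm hdom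
          have hsum0 : ∑ z ∈ s.erase m, x z = 0 := by
            have := hrow m hm; rwa [hfm] at this
          refine (ih (n-1) (by omega) (s.erase m) hcard' u z0
            (Finset.mem_erase.mpr ⟨fun h => hmu h.symm, hu⟩)
            (Finset.mem_erase.mpr ⟨fun h => hmz0 h.symm, hz0⟩) hr
            (fun z hz => hsub z (Finset.mem_erase.mp hz).2)).2 x (-(x m)) 0 ?_ ?_
          · intro a ha
            obtain ⟨ham, has⟩ := Finset.mem_erase.mp ha
            have hmf : m ∈ s.filter (fun z => R a z) :=
              Finset.mem_filter.mpr ⟨hm, hdom a has ham⟩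
            rw [hpeel m a ha (hdom a has ham) , Finset.sum_erase_eq_sub hmf,
              hrow a has]
            push_cast; ring
          · rw [hsum0]; push_cast; ring
    refine ⟨P1, ?_⟩
    intro x c k hrow hsum
    by_cases hiso : ∃ t ∈ s, ∀ z ∈ s, ¬ R t z
    · obtain ⟨t, ht, hti⟩ := hiso
      have hf : s.filter (fun z => R t z) = ∅ := by
        rw [Finset.filter_eq_empty_iff]; exact fun {z} hz => hti z hz
      have hc0 : c = 0 := by
        have h := hrow t ht
        rw [hf, Finset.sum_empty] at h
        have hk : ((k : ℝ) + 1) ≠ 0 := by positivity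
        rcases mul_eq_zero.mp h.symm with h' | h'
        · exact absurd h' hk
        · exact h'
      refine P1 x ?_
      intro a ha
      rw [hrow a ha, hc0, mul_zero]
    · push_neg at hiso
      obtain ⟨m, hm, hdom⟩ := core_dom2 wt R hsym hirr hmono s ⟨u, hu⟩ hiso
      by_cases hud : ∀ z ∈ s, z ≠ u → R z u
      · have hfu : s.filter (fun z => R u z) = s.erase u := hfil u hu hud
        have hrowu := hrow u hu
        rw [hfu, Finset.sum_erase_eq_sub hu, hsum] at hrowu
        have hxu : x u = -c := by linarith
        have hneu : (s.erase u).Nonempty := ⟨z0, Finset.mem_erase.mpr ⟨hz0u, hz0⟩⟩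
        have hrows' : ∀ a ∈ s.erase u,
            ∑ z ∈ (s.erase u).filter (fun z => R a z), x z = (((k+1 : ℕ) : ℝ) + 1) * c := by
          intro a ha
          obtain ⟨hau, has⟩ := Finset.mem_erase.mp ha
          have huf : u ∈ s.filter (fun z => R a z) :=
            Finset.mem_filter.mpr ⟨hu, hud a has hau⟩
          rw [hpeel u a ha (hud a has hau), Finset.sum_erase_eq_sub huf,
            hrow a has, hxu]
          push_cast; ring
        have hsum' : ∑ z ∈ s.erase u, x z = ((k+1 : ℕ) : ℝ) * c := by
          rw [Finset.sum_erase_eq_sub hu, hsum, hxu]; push_cast; ring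
        have hc0 := core_LC wt R hsym hirr hmono (s.erase u).card (s.erase u) rfl hneu
          x c (k+1) hrows' hsum'
        rw [hxu, hc0, neg_zero]
      · have hmu : m ≠ u := by rintro rfl; exact hud (fun z hz hzu => hdom z hz hzu)
        have hmz0 : m ≠ z0 := by rintro rfl; exact hud (hz0dom hdom)
        have hcard' : (s.erase m).card = n - 1 := by rw [Finset.card_erase_of_mem hm, hcard]
        have hfm : s.filter (fun z => R m z) = s.erase m := hfil m hm hdom
        have hxm : x m = -c := by
          have h := hrow m hm
          rw [hfm, Finset.sum_erase_eq_sub hm, hsum] at h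
          linarith
        refine (ih (n-1) (by omega) (s.erase m) hcard' u z0
          (Finset.mem_erase.mpr ⟨fun h => hmu h.symm, hu⟩)
          (Finset.mem_erase.mpr ⟨fun h => hmz0 h.symm, hz0⟩) hr
          (fun z hz => hsub z (Finset.mem_erase.mp hz).2)).2 x c (k+1) ?_ ?_
        · intro a ha
          obtain ⟨ham, has⟩ := Finset.mem_erase.mp ha
          have hmf : m ∈ s.filter (fun z => R a z) :=
            Finset.mem_filter.mpr ⟨hm, hdom a has ham⟩
          rw [hpeel m a ha (hdom a has ham), Finset.sum_erase_eq_sub hmf,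
            hrow a has, hxm]
          push_cast; ring
        · rw [Finset.sum_erase_eq_sub hm, hsum, hxm]; push_cast; ring
end Core2


section Core3
set_option linter.unusedSectionVars false
variable {V : Type*} [Fintype V] [DecidableEq V]

variable (wt : V → ℝ) (R : V → V → Prop) [DecidableRel R]
variable (hsym : ∀ a b, R a b → R b a) (hirr : ∀ a, ¬ R a a)
variable (hmono : ∀ a b c, wt a ≤ wt b → c ≠ b → R c a → R c b)

include hsym hirr hmono in
/-- kernel-vanishing for the B-system (eigenvalue -1 side). -/
lemma core_K : ∀ n (s : Finset V), s.card = n → ∀ u z0, u ∈ s → z0 ∈ s →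
    z0 ≠ u → ¬ R z0 u → (∀ c ∈ s, R c u → R c z0) →
    ∀ x : V → ℝ, (∀ a ∈ s, x a + ∑ z ∈ s.filter (fun z => R a z), x z = 0) → x u = 0 := by
  intro n
  induction n using Nat.strong_induction_on with
  | _ n ih =>
    intro s hcard u z0 hu hz0 hz0u hnr hsub x hrow
    by_cases huiso : ∀ z ∈ s, ¬ R u z
    · have hf : s.filter (fun z => R u z) = ∅ := by
        rw [Finset.filter_eq_empty_iff]; exact fun {z} hz => huiso z hz
      have h := hrow u hu
      rw [hf, Finset.sum_empty] at h
      linarith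
    · push_neg at huiso
      obtain ⟨zu, hzu, hruzu⟩ := huiso
      by_cases hiso : ∃ t ∈ s, ∀ z ∈ s, ¬ R t z
      · obtain ⟨t, ht, hti⟩ := hiso
        have htu : t ≠ u := by rintro rfl; exact hti zu hzu hruzu
        have htz0 : t ≠ z0 := by
          rintro rfl
          exact hti zu hzu (hsym zu t (hsub zu hzu (hsym u zu hruzu)))
        have hcard' : (s.erase t).card = n - 1 := by rw [Finset.card_erase_of_mem ht, hcard]
        have hnpos : 0 < n := hcard ▸ Finset.card_pos.mpr ⟨u, hu⟩
        refine ih (n-1) (by omega) (s.erase t) hcard' u z0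
          (Finset.mem_erase.mpr ⟨fun h => htu h.symm, hu⟩)
          (Finset.mem_erase.mpr ⟨fun h => htz0 h.symm, hz0⟩) hz0u hnr
          (fun c hc => hsub c (Finset.mem_erase.mp hc).2) x ?_
        intro a ha
        obtain ⟨hat, has⟩ := Finset.mem_erase.mp ha
        have : (s.erase t).filter (fun z => R a z) = s.filter (fun z => R a z) := by
          ext z; simp only [mem_filter, mem_erase]
          refine ⟨fun h => ⟨h.1.2, h.2⟩, fun h => ⟨⟨?_, h.1⟩, h.2⟩⟩
          rintro rfl
          exact hti a has (hsym a _ h.2)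
        rw [this]
        exact hrow a has
      · push_neg at hiso
        obtain ⟨m, hm, hdom⟩ := core_dom2 wt R hsym hirr hmono s ⟨u, hu⟩ hiso
        -- row m gives total sum zero
        have hfm : s.filter (fun z => R m z) = s.erase m := by
          ext z; simp only [mem_filter, mem_erase]
          exact ⟨fun h => ⟨fun he => hirr m (he ▸ h.2), h.1⟩,
            fun h => ⟨h.2, hsym z m (hdom z h.2 h.1)⟩⟩
        have hsumzero : ∑ z ∈ s, x z = 0 := by
          have h := hrow m hm
          rw [hfm, Finset.sum_erase_eq_sub hm] at h
          linarith
        -- complement relation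
        haveI hinst : DecidableRel (fun a b : V => a ≠ b ∧ ¬ R a b) :=
          fun a b => instDecidableAnd
        have hsym' : ∀ a b : V, (a ≠ b ∧ ¬ R a b) → (b ≠ a ∧ ¬ R b a) := by
          rintro a b ⟨hne, hnr'⟩
          exact ⟨hne.symm, fun h => hnr' (hsym b a h)⟩
        have hirr' : ∀ a : V, ¬ (a ≠ a ∧ ¬ R a a) := by rintro a ⟨hne, _⟩; exact hne rfl
        have hmono' : ∀ a b c : V, (-wt a) ≤ (-wt b) → c ≠ b →
            (c ≠ a ∧ ¬ R c a) → (c ≠ b ∧ ¬ R c b) := by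
          rintro a b c hle hcb ⟨hca, hncra⟩
          refine ⟨hcb, fun h => hncra ?_⟩
          exact hmono b a c (by linarith) hca h
        refine (core_L (fun z => -wt z) (fun a b => a ≠ b ∧ ¬ R a b) hsym' hirr' hmono'
          n s hcard u z0 hu hz0 ⟨hz0u, hnr⟩ ?_).1 x ?_
        · rintro z hz hzu ⟨hzz0, hnrz0⟩
          exact ⟨hzu, fun h => hnrz0 (hsub z hz h)⟩
        · intro a ha
          -- inline partition argument
          have h1 : s.filter (fun z => a ≠ z ∧ ¬ R a z)
              = (s.erase a).filter (fun z => ¬ R a z) := by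
            ext z; simp only [mem_filter, mem_erase]
            constructor
            · rintro ⟨hz, hne, hnr'⟩; exact ⟨⟨fun h => hne h.symm, hz⟩, hnr'⟩
            · rintro ⟨⟨hne, hz⟩, hnr'⟩; exact ⟨hz, fun h => hne h.symm, hnr'⟩
          have h2 : (s.erase a).filter (fun z => R a z) = s.filter (fun z => R a z) := by
            ext z; simp only [mem_filter, mem_erase]
            exact ⟨fun h => ⟨h.1.2, h.2⟩, fun h => ⟨⟨fun he => hirr a (he ▸ h.2), h.1⟩, h.2⟩⟩
          have h3 := Finset.sum_filter_add_sum_filter_not (s.erase a) (fun z => R a z) x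
          rw [h2] at h3
          have h4 : ∑ z ∈ s.erase a, x z = ∑ z ∈ s, x z - x a := Finset.sum_erase_eq_sub ha
          have hra := hrow a ha
          rw [h1]
          linarith [h3, h4, hra, hsumzero]
end Core3


section Plumb2
set_option linter.unusedSectionVars false
variable {V : Type*} [Fintype V] [DecidableEq V] (v : V)
  [Fintype ↥{w : V | w ≠ v}] [DecidableEq ↥{w : V | w ≠ v}]

variable (KG : Submodule ℝ (V → ℝ)) (KH : Submodule ℝ (↥{w : V | w ≠ v} → ℝ))

lemma restr_finrank
    (Ci : ∀ x ∈ KG, x v = 0)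
    (Crest : ∀ x ∈ KG, (fun w : ↥{w : V | w ≠ v} => x ↑w) ∈ KH)
    (Cext : ∀ y ∈ KH, (fun z : V => if h : z = v then 0 else y ⟨z, h⟩) ∈ KG) :
    Module.finrank ℝ KG = Module.finrank ℝ KH := by
  refine LinearEquiv.finrank_eq (LinearEquiv.ofLinear
    (LinearMap.mk (AddHom.mk (fun x : KG =>
      (⟨fun w => x.1 ↑w, Crest x.1 x.2⟩ : KH)) ?_) ?_)
    (LinearMap.mk (AddHom.mk (fun y : KH =>
      (⟨fun z => if h : z = v then 0 else y.1 ⟨z, h⟩, Cext y.1 y.2⟩ : KG)) ?_) ?_)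
    ?_ ?_)
  · intro a b; apply Subtype.ext; funext w; rfl
  · intro m a; apply Subtype.ext; funext w; rfl
  · intro a b
    apply Subtype.ext; funext z
    simp only [Submodule.coe_add, Pi.add_apply]
    by_cases h : z = v <;> simp [h]
  · intro m a
    apply Subtype.ext; funext z
    simp only [Submodule.coe_smul, Pi.smul_apply, smul_eq_mul, RingHom.id_apply]
    by_cases h : z = v <;> simp [h]
  · apply LinearMap.ext; intro y
    apply Subtype.ext; funext w
    simp only [LinearMap.coe_mk, AddHom.coe_mk, LinearMap.comp_apply, LinearMap.id_apply]
    rw [dif_neg w.2]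
  · apply LinearMap.ext; intro x
    apply Subtype.ext; funext z
    simp only [LinearMap.coe_mk, AddHom.coe_mk, LinearMap.comp_apply, LinearMap.id_apply]
    by_cases h : z = v
    · rw [dif_pos h, h, Ci x.1 x.2]
    · rw [dif_neg h]

lemma plus1_finrank (u' : ↥{w : V | w ≠ v}) (c : ℝ)
    (C1 : ∀ x ∈ KG, (fun w : ↥{w : V | w ≠ v} =>
        x ↑w + x v * (if w = u' then c else 0)) ∈ KH)
    (C2 : ∀ y ∈ KH, ∀ t : ℝ, (fun z : V =>
        if h : z = v then t else y ⟨z, h⟩ + (if z = ↑u' then -(c*t) else 0)) ∈ KG) :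
    Module.finrank ℝ KG = Module.finrank ℝ KH + 1 := by
  have key : Module.finrank ℝ KG = Module.finrank ℝ (KH × ℝ) := by
    refine LinearEquiv.finrank_eq (LinearEquiv.ofLinear
      (LinearMap.mk (AddHom.mk (fun x : KG =>
        ((⟨fun w => x.1 ↑w + x.1 v * (if w = u' then c else 0), C1 x.1 x.2⟩ : KH),
          x.1 v)) ?_) ?_)
      (LinearMap.mk (AddHom.mk (fun p : KH × ℝ =>
        (⟨fun z => if h : z = v then p.2
          else p.1.1 ⟨z, h⟩ + (if z = ↑u' then -(c*p.2) else 0),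
            C2 p.1.1 p.1.2 p.2⟩ : KG)) ?_) ?_)
      ?_ ?_)
    · intro a b
      refine Prod.ext ?_ rfl
      apply Subtype.ext; funext w
      simp only [Submodule.coe_add, Pi.add_apply, Prod.fst_add]
      ring
    · intro m a
      refine Prod.ext ?_ rfl
      apply Subtype.ext; funext w
      simp only [Submodule.coe_smul, Pi.smul_apply, smul_eq_mul, RingHom.id_apply,
        Prod.smul_fst]
      ring
    · intro a b
      apply Subtype.ext; funext z
      simp only [Submodule.coe_add, Pi.add_apply, Prod.fst_add, Prod.snd_add]
      by_cases h : z = v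
      · simp [h]
      · rw [dif_neg h, dif_neg h, dif_neg h]
        by_cases hz : z = ↑u' <;> simp [hz] <;> ring
    · intro m a
      apply Subtype.ext; funext z
      simp only [Submodule.coe_smul, Pi.smul_apply, smul_eq_mul, RingHom.id_apply,
        Prod.smul_fst, Prod.smul_snd]
      by_cases h : z = v
      · simp [h]
      · rw [dif_neg h, dif_neg h]
        by_cases hz : z = ↑u' <;> simp [hz] <;> ring
    · apply LinearMap.ext; intro p
      refine Prod.ext ?_ ?_
      · apply Subtype.ext; funext w
        simp only [LinearMap.coe_mk, AddHom.coe_mk, LinearMap.comp_apply, LinearMap.id_apply]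
        rw [dif_neg w.2, dif_pos True.intro]
        by_cases hw : w = u'
        · have hwv : (↑w : V) = ↑u' := by rw [hw]
          rw [if_pos hw, if_pos hwv]
          have he : (⟨(↑w : V), w.2⟩ : ↥{w : V | w ≠ v}) = w := rfl
          rw [he, hw]
          ring
        · have hwv : (↑w : V) ≠ ↑u' := fun h => hw (Subtype.ext h)
          rw [if_neg hw, if_neg hwv]
          have he : (⟨(↑w : V), w.2⟩ : ↥{w : V | w ≠ v}) = w := rfl
          rw [he]
          ring
      · simp only [LinearMap.coe_mk, AddHom.coe_mk, LinearMap.comp_apply, LinearMap.id_apply]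
        rw [dif_pos True.intro]
    · apply LinearMap.ext; intro x
      apply Subtype.ext; funext z
      simp only [LinearMap.coe_mk, AddHom.coe_mk, LinearMap.comp_apply, LinearMap.id_apply]
      by_cases h : z = v
      · rw [dif_pos h, h]
      · rw [dif_neg h]
        by_cases hz : z = ↑u'
        · have he : (⟨z, h⟩ : ↥{w : V | w ≠ v}) = u' := Subtype.ext hz
          rw [if_pos hz]
          simp only [he]
          simp only [if_pos rfl, ite_true, eq_self_iff_true]
          ring
        · have he : (⟨z, h⟩ : ↥{w : V | w ≠ v}) ≠ u' := fun hh => hz (congrArg Subtype.val hh)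
          rw [if_neg hz, if_neg he]
          ring
  rw [key, Module.finrank_prod, Module.finrank_self]
end Plumb2


section Glem
set_option linter.unusedSectionVars false
set_option maxHeartbeats 800000
variable {V : Type*} [Fintype V] [DecidableEq V] (G : SimpleGraph V) [DecidableRel G.Adj]

lemma mem_ker_iff' (μ : ℝ) (x : V → ℝ) :
    x ∈ LinearMap.ker (Matrix.toLin' (G.adjMatrix ℝ - μ • (1 : Matrix V V ℝ)))
      ↔ ∀ a : V, ∑ z ∈ univ.filter (fun z => G.Adj a z), x z = μ * x a := by
  rw [LinearMap.mem_ker, Matrix.toLin'_apply, Matrix.sub_mulVec, Matrix.smul_mulVec,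
    Matrix.one_mulVec, sub_eq_zero, funext_iff]
  refine forall_congr' fun a => ?_
  rw [SimpleGraph.adjMatrix_mulVec_apply]
  have h : G.neighborFinset a = univ.filter (fun z => G.Adj a z) := by ext w; simp
  rw [h]
  exact ⟨fun h => by rw [h]; rfl, fun h => by rw [h]; rfl⟩

variable (v : V) [Fintype ↥{w : V | w ≠ v}] [DecidableEq ↥{w : V | w ≠ v}]
  [DecidableRel (G.induce {w : V | w ≠ v}).Adj]

lemma sum_split (f : V → ℝ) (P : V → Prop) [DecidablePred P] :
    ∑ z ∈ univ.filter (fun z => P z), f z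
      = (∑ w ∈ (univ : Finset ↥{w : V | w ≠ v}).filter
            (fun w : ↥{w : V | w ≠ v} => P ↑w), f ↑w)
        + (if P v then f v else 0) := by
  have h1 : ∑ w ∈ (univ : Finset ↥{w : V | w ≠ v}).filter
        (fun w : ↥{w : V | w ≠ v} => P ↑w), f ↑w
      = ∑ w : ↥{w : V | w ≠ v}, (if P ↑w then f ↑w else 0) := by
    rw [Finset.sum_filter]
  have h2 : ∑ z ∈ univ.erase v, (if P z then f z else 0)
      = ∑ w : ↥{w : V | w ≠ v}, (if P ↑w then f ↑w else 0) := by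
    refine Finset.sum_subtype (univ.erase v) (fun z => ?_) (fun z => if P z then f z else 0)
    simp [Finset.mem_erase]
  have h3 : ∑ z ∈ univ.erase v, (if P z then f z else 0)
      = (∑ z : V, (if P z then f z else 0)) - (if P v then f v else 0) :=
    Finset.sum_erase_eq_sub (mem_univ v)
  have h4 : ∑ z : V, (if P z then f z else 0) = ∑ z ∈ univ.filter (fun z => P z), f z := by
    rw [Finset.sum_filter]
  rw [h1, ← h2, h3, h4]
  ring

lemma filter_induce' (a : ↥{w : V | w ≠ v}) :
    (univ : Finset ↥{w : V | w ≠ v}).filter (fun w => (G.induce {w : V | w ≠ v}).Adj a w)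
      = (univ : Finset ↥{w : V | w ≠ v}).filter
          (fun w : ↥{w : V | w ≠ v} => G.Adj ↑a ↑w) := by
  ext w; simp

/-- H-row sums as G-row sums -/
lemma hrow_eq (x : V → ℝ) (a : ↥{w : V | w ≠ v}) :
    ∑ w ∈ (univ : Finset ↥{w : V | w ≠ v}).filter
        (fun w => (G.induce {w : V | w ≠ v}).Adj a w), x ↑w
      = (∑ z ∈ univ.filter (fun z => G.Adj ↑a z), x z)
        - (if G.Adj ↑a v then x v else 0) := by
  rw [filter_induce', sum_split v x (fun z => G.Adj (↑a) z)]
  ring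

/-- sums of the `u'`-corrected function over subtype filters -/
lemma sum_corr (y : ↥{w : V | w ≠ v} → ℝ) (u' : ↥{w : V | w ≠ v}) (r : ℝ) (a : V) :
    ∑ w ∈ (univ : Finset ↥{w : V | w ≠ v}).filter
        (fun w : ↥{w : V | w ≠ v} => G.Adj a ↑w),
        (y w + (if w = u' then r else 0))
      = (∑ w ∈ (univ : Finset ↥{w : V | w ≠ v}).filter
          (fun w : ↥{w : V | w ≠ v} => G.Adj a ↑w), y w)
        + (if G.Adj a ↑u' then r else 0) := by
  rw [Finset.sum_add_distrib]
  congr 1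
  rw [Finset.sum_ite_eq' (((univ : Finset ↥{w : V | w ≠ v})).filter
    (fun w : ↥{w : V | w ≠ v} => G.Adj a ↑w)) u' (fun _ => r)]
  congr 1
  simp

end Glem



section GlemB
set_option linter.unusedSectionVars false
set_option maxHeartbeats 1600000
variable {V : Type*} [Fintype V] [DecidableEq V] (G : SimpleGraph V) [DecidableRel G.Adj]
variable (v : V) [Fintype ↥{w : V | w ≠ v}] [DecidableEq ↥{w : V | w ≠ v}]
  [DecidableRel (G.induce {w : V | w ≠ v}).Adj]

lemma grow_eq (x : V → ℝ) (a : V) :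
    ∑ w ∈ (univ : Finset ↥{w : V | w ≠ v}).filter
        (fun w : ↥{w : V | w ≠ v} => G.Adj a ↑w), x ↑w
      = (∑ z ∈ univ.filter (fun z => G.Adj a z), x z)
        - (if G.Adj a v then x v else 0) := by
  rw [sum_split v x (fun z => G.Adj a z)]
  ring

/-- pointwise form of the back-map -/
lemma back_apply (y : ↥{w : V | w ≠ v} → ℝ) (u' : ↥{w : V | w ≠ v}) (c t : ℝ)
    (w : ↥{w : V | w ≠ v}) :
    (fun z : V => if h : z = v then t
        else y ⟨z, h⟩ + (if z = ↑u' then -(c*t) else 0)) ↑w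
      = y w + (if w = u' then -(c*t) else 0) := by
  simp only []
  rw [dif_neg w.2]
  simp only [Subtype.coe_inj]

lemma glem_iso (hiso : ∀ z, ¬ G.Adj v z) (u' : ↥{w : V | w ≠ v}) :
    (Module.finrank ℝ (LinearMap.ker (Matrix.toLin'
        (G.adjMatrix ℝ - (0:ℝ) • (1 : Matrix V V ℝ))))
      = Module.finrank ℝ (LinearMap.ker (Matrix.toLin'
          ((G.induce {w : V | w ≠ v}).adjMatrix ℝ
            - (0:ℝ) • (1 : Matrix ↥{w : V | w ≠ v} ↥{w : V | w ≠ v} ℝ)))) + 1)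
    ∧ (Module.finrank ℝ (LinearMap.ker (Matrix.toLin'
        (G.adjMatrix ℝ - (-1:ℝ) • (1 : Matrix V V ℝ))))
      = Module.finrank ℝ (LinearMap.ker (Matrix.toLin'
          ((G.induce {w : V | w ≠ v}).adjMatrix ℝ
            - (-1:ℝ) • (1 : Matrix ↥{w : V | w ≠ v} ↥{w : V | w ≠ v} ℝ))))) := by
  have hvadj : ∀ a, ¬ G.Adj a v := fun a h => hiso a h.symm
  have hfilv : univ.filter (fun z => G.Adj v z) = (∅ : Finset V) := by
    rw [Finset.filter_eq_empty_iff]; exact fun {z} _ => hiso z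
  constructor
  · refine plus1_finrank v _ _ u' 0 ?_ ?_
    · intro x hx
      rw [mem_ker_iff'] at hx ⊢
      intro a'
      rw [filter_induce']
      simp only [ite_self, mul_zero, add_zero]
      rw [grow_eq, hx ↑a', if_neg (hvadj ↑a')]
      ring
    · intro y hy t
      rw [mem_ker_iff'] at hy ⊢
      intro a
      rw [sum_split v _ (fun z => G.Adj a z), if_neg (hvadj a)]
      have hpt : ∀ w : ↥{w : V | w ≠ v},
          (fun z : V => if h : z = v then t
            else y ⟨z, h⟩ + (if z = ↑u' then -(0*t) else 0)) ↑w = y w := by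
        intro w; rw [back_apply]; simp
      rw [Finset.sum_congr rfl (fun w _ => hpt w)]
      by_cases ha : a = v
      · have hemp : (univ : Finset ↥{w : V | w ≠ v}).filter
            (fun w : ↥{w : V | w ≠ v} => G.Adj a ↑w) = ∅ := by
          rw [Finset.filter_eq_empty_iff]; exact fun {w} _ h => hiso ↑w (ha ▸ h)
        rw [hemp, Finset.sum_empty]
        simp
      · have hrow := hy ⟨a, ha⟩
        rw [filter_induce'] at hrow
        rw [hrow]
        simp
  · refine restr_finrank v _ _ ?_ ?_ ?_
    · intro x hx
      rw [mem_ker_iff'] at hx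
      have hv := hx v
      rw [hfilv, Finset.sum_empty] at hv
      linarith
    · intro x hx
      rw [mem_ker_iff'] at hx ⊢
      intro a'
      rw [filter_induce', grow_eq, hx ↑a', if_neg (hvadj _)]
      ring
    · intro y hy
      rw [mem_ker_iff'] at hy ⊢
      intro a
      rw [sum_split v _ (fun z => G.Adj a z), if_neg (hvadj a)]
      have hpt : ∀ w : ↥{w : V | w ≠ v},
          (fun z : V => if h : z = v then 0 else y ⟨z, h⟩) ↑w = y w := by
        intro w; simp only []; rw [dif_neg w.2]
      rw [Finset.sum_congr rfl (fun w _ => hpt w)]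
      by_cases ha : a = v
      · have hemp : (univ : Finset ↥{w : V | w ≠ v}).filter
            (fun w : ↥{w : V | w ≠ v} => G.Adj a ↑w) = ∅ := by
          rw [Finset.filter_eq_empty_iff]; exact fun {w} _ h => hiso ↑w (ha ▸ h)
        rw [hemp, Finset.sum_empty]
        simp only [zero_add, add_zero]
        rw [dif_pos ha]
        ring
      · have hrow := hy ⟨a, ha⟩
        rw [filter_induce'] at hrow
        rw [hrow]
        simp only [add_zero]
        rw [dif_neg ha]

end GlemB


section GlemDev
set_option linter.unusedSectionVars false
set_option maxHeartbeats 1600000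
variable {V : Type*} [Fintype V] [DecidableEq V] (G : SimpleGraph V) [DecidableRel G.Adj]

/-- vanishing at a vertex with a non-neighbour dominator, for the (-1)-kernel -/
lemma vanish_K (wt : V → ℝ)
    (hmono : ∀ a b c : V, wt a ≤ wt b → c ≠ b → G.Adj c a → G.Adj c b)
    (u z0 : V) (hz0u : z0 ≠ u) (hnadj : ¬ G.Adj z0 u)
    (hsub : ∀ c : V, G.Adj c u → G.Adj c z0)
    (x : V → ℝ)
    (hx : x ∈ LinearMap.ker (Matrix.toLin' (G.adjMatrix ℝ - (-1:ℝ) • (1 : Matrix V V ℝ)))) :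
    x u = 0 := by
  rw [mem_ker_iff'] at hx
  refine core_K wt G.Adj (fun a b h => h.symm) (fun a h => G.loopless.irrefl a h) hmono
    (univ.card) univ rfl u z0 (mem_univ u) (mem_univ z0) hz0u hnadj
    (fun c _ h => hsub c h) x (fun a _ => ?_)
  have := hx a
  linarith

/-- vanishing at a vertex with a dominated neighbour, for the 0-kernel -/
lemma vanish_L (wt : V → ℝ)
    (hmono : ∀ a b c : V, wt a ≤ wt b → c ≠ b → G.Adj c a → G.Adj c b)
    (u z0 : V) (hadj : G.Adj z0 u)
    (hsub : ∀ z : V, z ≠ u → G.Adj z z0 → G.Adj z u)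
    (x : V → ℝ)
    (hx : x ∈ LinearMap.ker (Matrix.toLin' (G.adjMatrix ℝ - (0:ℝ) • (1 : Matrix V V ℝ)))) :
    x u = 0 := by
  rw [mem_ker_iff'] at hx
  refine (core_L wt G.Adj (fun a b h => h.symm) (fun a h => G.loopless.irrefl a h) hmono
    (univ.card) univ rfl u z0 (mem_univ u) (mem_univ z0) hadj
    (fun z _ => hsub z)).1 x (fun a _ => ?_)
  have := hx a
  linarith

variable (v : V) [Fintype ↥{w : V | w ≠ v}] [DecidableEq ↥{w : V | w ≠ v}]
  [DecidableRel (G.induce {w : V | w ≠ v}).Adj]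

/-- induced monotonicity -/
lemma hmono_induce (wt : V → ℝ)
    (hmono : ∀ a b c : V, wt a ≤ wt b → c ≠ b → G.Adj c a → G.Adj c b) :
    ∀ a b c : ↥{w : V | w ≠ v}, (fun w : ↥{w : V | w ≠ v} => wt ↑w) a ≤
        (fun w : ↥{w : V | w ≠ v} => wt ↑w) b → c ≠ b →
      (G.induce {w : V | w ≠ v}).Adj c a → (G.induce {w : V | w ≠ v}).Adj c b := by
  intro a b c hle hne hadj
  have h1 : G.Adj ↑c ↑a := by simpa using hadj
  have h2 : G.Adj ↑c ↑b := hmono ↑a ↑b ↑c hle (fun h => hne (Subtype.ext h)) h1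
  simpa using h2

end GlemDev



section GlemC
set_option linter.unusedSectionVars false
set_option maxHeartbeats 1600000
variable {V : Type*} [Fintype V] [DecidableEq V] (G : SimpleGraph V) [DecidableRel G.Adj]
variable (v : V) [Fintype ↥{w : V | w ≠ v}] [DecidableEq ↥{w : V | w ≠ v}]
  [DecidableRel (G.induce {w : V | w ≠ v}).Adj]

lemma glem_false (wt : V → ℝ)
    (hmono : ∀ a b c : V, wt a ≤ wt b → c ≠ b → G.Adj c a → G.Adj c b)
    (u : V) (hu : u ≠ v) (hnadj : ¬ G.Adj u v)
    (htwin : ∀ z, G.Adj z u ↔ G.Adj z v)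
    (z0 : V) (hz0u : z0 ≠ u) (hz0v : z0 ≠ v)
    (hz0na : ¬ G.Adj z0 u) (hz0sub : ∀ c, G.Adj c u → G.Adj c z0) :
    (Module.finrank ℝ (LinearMap.ker (Matrix.toLin'
        (G.adjMatrix ℝ - (0:ℝ) • (1 : Matrix V V ℝ))))
      = Module.finrank ℝ (LinearMap.ker (Matrix.toLin'
          ((G.induce {w : V | w ≠ v}).adjMatrix ℝ
            - (0:ℝ) • (1 : Matrix ↥{w : V | w ≠ v} ↥{w : V | w ≠ v} ℝ)))) + 1)
    ∧ (Module.finrank ℝ (LinearMap.ker (Matrix.toLin'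
        (G.adjMatrix ℝ - (-1:ℝ) • (1 : Matrix V V ℝ))))
      = Module.finrank ℝ (LinearMap.ker (Matrix.toLin'
          ((G.induce {w : V | w ≠ v}).adjMatrix ℝ
            - (-1:ℝ) • (1 : Matrix ↥{w : V | w ≠ v} ↥{w : V | w ≠ v} ℝ))))) := by
  have hvanG : ∀ x, x ∈ LinearMap.ker (Matrix.toLin'
      (G.adjMatrix ℝ - (-1:ℝ) • (1 : Matrix V V ℝ))) → x v = 0 := by
    intro x hx
    exact vanish_K G wt hmono v z0 hz0v (fun h => hz0na ((htwin z0).mpr h))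
      (fun c h => hz0sub c ((htwin c).mpr h)) x hx
  constructor
  · refine plus1_finrank v _ _ (⟨u, hu⟩ : ↥{w : V | w ≠ v}) 1 ?_ ?_
    · intro x hx
      rw [mem_ker_iff'] at hx ⊢
      intro a'
      rw [filter_induce']
      simp only [mul_ite, mul_one, mul_zero]
      rw [sum_corr, grow_eq, hx ↑a']
      by_cases hC : G.Adj (↑a') v
      · rw [if_pos hC, if_pos ((htwin ↑a').mpr hC)]; ring
      · rw [if_neg hC, if_neg (fun h => hC ((htwin ↑a').mp h))]; ring
    · intro y hy t
      rw [mem_ker_iff'] at hy ⊢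
      intro a
      rw [sum_split v _ (fun z => G.Adj a z)]
      rw [Finset.sum_congr rfl (fun w _ => back_apply v y ⟨u, hu⟩ 1 t w)]
      rw [sum_corr]
      rw [dif_pos (rfl : v = v)]
      by_cases ha : a = v
      · have hFv : (univ : Finset ↥{w : V | w ≠ v}).filter
            (fun w : ↥{w : V | w ≠ v} => G.Adj a ↑w)
            = (univ : Finset ↥{w : V | w ≠ v}).filter
              (fun w : ↥{w : V | w ≠ v} => G.Adj (↑(⟨u, hu⟩ : ↥{w : V | w ≠ v})) ↑w) := by
          ext w
          simp only [mem_filter, mem_univ, true_and]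
          constructor
          · intro h
            exact ((htwin ↑w).mpr (ha ▸ h).symm).symm
          · intro h
            have h2 : G.Adj (↑w) v := (htwin ↑w).mp h.symm
            rw [ha]
            exact h2.symm
        rw [hFv]
        have hrowu := hy (⟨u, hu⟩ : ↥{w : V | w ≠ v})
        rw [filter_induce'] at hrowu
        rw [hrowu]
        have h1 : ¬ G.Adj a (↑(⟨u, hu⟩ : ↥{w : V | w ≠ v})) := by
          rw [ha]; exact fun h => hnadj h.symm
        have h2 : ¬ G.Adj a v := by rw [ha]; exact fun h => G.loopless.irrefl v h
        rw [if_neg h1, if_neg h2]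
        simp
      · have hrowa := hy ⟨a, ha⟩
        rw [filter_induce'] at hrowa
        rw [hrowa]
        simp only [zero_mul]
        by_cases hC : G.Adj a v
        · rw [if_pos hC, if_pos ((htwin a).mpr hC)]; ring
        · rw [if_neg hC, if_neg (fun h => hC ((htwin a).mp h))]; ring
  · refine restr_finrank v _ _ ?_ ?_ ?_
    · exact fun x hx => hvanG x hx
    · intro x hx
      have hxv : x v = 0 := hvanG x hx
      rw [mem_ker_iff'] at hx ⊢
      intro a'
      rw [filter_induce', grow_eq, hx ↑a', hxv]
      simp only [ite_self]
      ring
    · intro y hy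
      have hyu : y (⟨u, hu⟩ : ↥{w : V | w ≠ v}) = 0 := by
        refine vanish_K (G.induce {w : V | w ≠ v}) (fun w => wt ↑w)
          (hmono_induce G v wt hmono) ⟨u, hu⟩ ⟨z0, hz0v⟩ ?_ ?_ ?_ y hy
        · exact fun h => hz0u (congrArg Subtype.val h)
        · intro h
          exact hz0na (by simpa using h)
        · intro c h
          have h2 : G.Adj (↑c) u := by simpa using h
          simpa using hz0sub ↑c h2
      rw [mem_ker_iff'] at hy ⊢
      intro a
      rw [sum_split v _ (fun z => G.Adj a z)]
      have hpt : ∀ w : ↥{w : V | w ≠ v},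
          (fun z : V => if h : z = v then 0 else y ⟨z, h⟩) ↑w = y w := by
        intro w; simp only []; rw [dif_neg w.2]
      rw [Finset.sum_congr rfl (fun w _ => hpt w)]
      rw [dif_pos (rfl : v = v)]
      by_cases ha : a = v
      · have hFv : (univ : Finset ↥{w : V | w ≠ v}).filter
            (fun w : ↥{w : V | w ≠ v} => G.Adj a ↑w)
            = (univ : Finset ↥{w : V | w ≠ v}).filter
              (fun w : ↥{w : V | w ≠ v} => G.Adj (↑(⟨u, hu⟩ : ↥{w : V | w ≠ v})) ↑w) := by
          ext w
          simp only [mem_filter, mem_univ, true_and]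
          constructor
          · intro h
            exact ((htwin ↑w).mpr (ha ▸ h).symm).symm
          · intro h
            have h2 : G.Adj (↑w) v := (htwin ↑w).mp h.symm
            rw [ha]
            exact h2.symm
        rw [hFv]
        have hrowu := hy (⟨u, hu⟩ : ↥{w : V | w ≠ v})
        rw [filter_induce'] at hrowu
        rw [hrowu, hyu]
        rw [dif_pos ha]
        simp
      · have hrowa := hy ⟨a, ha⟩
        rw [filter_induce'] at hrowa
        rw [hrowa]
        rw [dif_neg ha]
        simp


lemma glem_true (wt : V → ℝ)
    (hmono : ∀ a b c : V, wt a ≤ wt b → c ≠ b → G.Adj c a → G.Adj c b)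
    (u : V) (hu : u ≠ v) (hadj : G.Adj u v)
    (htwin : ∀ z, z ≠ u → z ≠ v → (G.Adj z u ↔ G.Adj z v))
    (z0 : V) (hz0u : z0 ≠ u) (hz0v : z0 ≠ v)
    (hz0adj : G.Adj z0 u) (hz0sub : ∀ z, z ≠ u → G.Adj z z0 → G.Adj z u) :
    (Module.finrank ℝ (LinearMap.ker (Matrix.toLin'
        (G.adjMatrix ℝ - (0:ℝ) • (1 : Matrix V V ℝ))))
      = Module.finrank ℝ (LinearMap.ker (Matrix.toLin'
          ((G.induce {w : V | w ≠ v}).adjMatrix ℝ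
            - (0:ℝ) • (1 : Matrix ↥{w : V | w ≠ v} ↥{w : V | w ≠ v} ℝ)))))
    ∧ (Module.finrank ℝ (LinearMap.ker (Matrix.toLin'
        (G.adjMatrix ℝ - (-1:ℝ) • (1 : Matrix V V ℝ))))
      = Module.finrank ℝ (LinearMap.ker (Matrix.toLin'
          ((G.induce {w : V | w ≠ v}).adjMatrix ℝ
            - (-1:ℝ) • (1 : Matrix ↥{w : V | w ≠ v} ↥{w : V | w ≠ v} ℝ)))) + 1) := by
  have huF : (⟨u, hu⟩ : ↥{w : V | w ≠ v}) ∉ (univ : Finset ↥{w : V | w ≠ v}).filter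
      (fun w : ↥{w : V | w ≠ v} => G.Adj (↑(⟨u, hu⟩ : ↥{w : V | w ≠ v})) ↑w) := by
    simp only [mem_filter, mem_univ, true_and]
    exact fun h => G.loopless.irrefl u h
  have hFv : ∀ a : V, a = v → (univ : Finset ↥{w : V | w ≠ v}).filter
      (fun w : ↥{w : V | w ≠ v} => G.Adj a ↑w)
      = insert (⟨u, hu⟩ : ↥{w : V | w ≠ v}) ((univ : Finset ↥{w : V | w ≠ v}).filter
          (fun w : ↥{w : V | w ≠ v} => G.Adj (↑(⟨u, hu⟩ : ↥{w : V | w ≠ v})) ↑w)) := by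
    intro a ha
    ext w
    simp only [mem_filter, mem_univ, true_and, mem_insert]
    constructor
    · intro h
      by_cases hw : w = (⟨u, hu⟩ : ↥{w : V | w ≠ v})
      · exact Or.inl hw
      · right
        have hwu : (↑w : V) ≠ u := fun hh => hw (Subtype.ext hh)
        have h2 : G.Adj (↑w) v := (ha ▸ h).symm
        exact ((htwin ↑w hwu w.2).mpr h2).symm
    · rintro (rfl | h)
      · rw [ha]; exact hadj.symm
      · have hwu : (↑w : V) ≠ u := fun hh => G.loopless.irrefl u (hh ▸ h)
        have h2 : G.Adj (↑w) v := (htwin ↑w hwu w.2).mp h.symm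
        rw [ha]; exact h2.symm
  have hvanG : ∀ x, x ∈ LinearMap.ker (Matrix.toLin'
      (G.adjMatrix ℝ - (0:ℝ) • (1 : Matrix V V ℝ))) → x v = 0 := by
    intro x hx
    refine vanish_L G wt hmono v z0 ((htwin z0 hz0u hz0v).mp hz0adj) ?_ x hx
    intro z hzv h
    by_cases hzu : z = u
    · rw [hzu]; exact hadj
    · exact (htwin z hzu hzv).mp (hz0sub z hzu h)
  constructor
  · refine restr_finrank v _ _ ?_ ?_ ?_
    · exact fun x hx => hvanG x hx
    · intro x hx
      have hxv : x v = 0 := hvanG x hx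
      rw [mem_ker_iff'] at hx ⊢
      intro a'
      rw [filter_induce', grow_eq, hx ↑a', hxv]
      simp only [ite_self]
      ring
    · intro y hy
      have hyu : y (⟨u, hu⟩ : ↥{w : V | w ≠ v}) = 0 := by
        refine vanish_L (G.induce {w : V | w ≠ v}) (fun w => wt ↑w)
          (hmono_induce G v wt hmono) ⟨u, hu⟩ ⟨z0, hz0v⟩ (by simpa using hz0adj) ?_ y hy
        intro c hne h
        have h2 : G.Adj (↑c) z0 := by simpa using h
        have h3 : (↑c : V) ≠ u := fun hh => hne (Subtype.ext hh)
        simpa using hz0sub ↑c h3 h2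
      rw [mem_ker_iff'] at hy ⊢
      intro a
      rw [sum_split v _ (fun z => G.Adj a z)]
      have hpt : ∀ w : ↥{w : V | w ≠ v},
          (fun z : V => if h : z = v then 0 else y ⟨z, h⟩) ↑w = y w := by
        intro w; simp only []; rw [dif_neg w.2]
      rw [Finset.sum_congr rfl (fun w _ => hpt w)]
      rw [dif_pos (rfl : v = v)]
      by_cases ha : a = v
      · rw [hFv a ha, Finset.sum_insert huF]
        have hrowu := hy (⟨u, hu⟩ : ↥{w : V | w ≠ v})
        rw [filter_induce'] at hrowu
        rw [hrowu, hyu]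
        rw [dif_pos ha]
        simp
      · have hrowa := hy ⟨a, ha⟩
        rw [filter_induce'] at hrowa
        rw [hrowa]
        rw [dif_neg ha]
        simp
  · refine plus1_finrank v _ _ (⟨u, hu⟩ : ↥{w : V | w ≠ v}) 1 ?_ ?_
    · intro x hx
      rw [mem_ker_iff'] at hx ⊢
      intro a'
      rw [filter_induce']
      simp only [mul_ite, mul_one, mul_zero]
      rw [sum_corr, grow_eq, hx ↑a']
      by_cases haU : a' = (⟨u, hu⟩ : ↥{w : V | w ≠ v})
      · have h1 : G.Adj (↑a') v := by rw [haU]; exact hadj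
        have h2 : ¬ G.Adj (↑a') (↑(⟨u, hu⟩ : ↥{w : V | w ≠ v})) := by
          rw [haU]; exact fun h => G.loopless.irrefl u h
        rw [if_pos h1, if_neg h2, if_pos haU, haU]
        ring
      · have hneu : (↑a' : V) ≠ u := fun h => haU (Subtype.ext h)
        have hiff : G.Adj (↑a') (↑(⟨u, hu⟩ : ↥{w : V | w ≠ v})) ↔ G.Adj (↑a') v :=
          htwin ↑a' hneu a'.2
        rw [if_neg haU]
        by_cases hC : G.Adj (↑a') v
        · rw [if_pos hC, if_pos (hiff.mpr hC)]; ring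
        · rw [if_neg hC, if_neg (fun h => hC (hiff.mp h))]; ring
    · intro y hy t
      rw [mem_ker_iff'] at hy ⊢
      intro a
      rw [sum_split v _ (fun z => G.Adj a z)]
      rw [Finset.sum_congr rfl (fun w _ => back_apply v y ⟨u, hu⟩ 1 t w)]
      rw [sum_corr]
      rw [dif_pos (rfl : v = v)]
      by_cases ha : a = v
      · rw [hFv a ha, Finset.sum_insert huF]
        have hrowu := hy (⟨u, hu⟩ : ↥{w : V | w ≠ v})
        rw [filter_induce'] at hrowu
        rw [hrowu]
        have h1 : G.Adj a (↑(⟨u, hu⟩ : ↥{w : V | w ≠ v})) := by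
          rw [ha]; exact hadj.symm
        have h2 : ¬ G.Adj a v := by rw [ha]; exact fun h => G.loopless.irrefl v h
        rw [if_pos h1, if_neg h2, dif_pos ha]
        ring
      · have hrowa := hy ⟨a, ha⟩
        rw [filter_induce'] at hrowa
        rw [hrowa, dif_neg ha]
        by_cases haU : a = u
        · have h1 : ¬ G.Adj a (↑(⟨u, hu⟩ : ↥{w : V | w ≠ v})) := by
            rw [haU]; exact fun h => G.loopless.irrefl u h
          have h2 : G.Adj a v := by rw [haU]; exact hadj
          have h3 : a = ↑(⟨u, hu⟩ : ↥{w : V | w ≠ v}) := haU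
          rw [if_neg h1, if_pos h2, if_pos h3]
          ring
        · have hiff : G.Adj a (↑(⟨u, hu⟩ : ↥{w : V | w ≠ v})) ↔ G.Adj a v := htwin a haU ha
          have h3 : a ≠ ↑(⟨u, hu⟩ : ↥{w : V | w ≠ v}) := haU
          rw [if_neg h3]
          by_cases hC : G.Adj a v
          · rw [if_pos hC, if_pos (hiff.mpr hC)]; ring
          · rw [if_neg hC, if_neg (fun h => hC (hiff.mp h))]; ring


end GlemC


section Final
set_option linter.unusedSectionVars false
set_option maxHeartbeats 1600000
variable {V : Type*} [Fintype V] [DecidableEq V] (G : SimpleGraph V) [DecidableRel G.Adj]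

lemma eigMult_eq (μ : ℝ) :
    G.eigMult μ = Module.finrank ℝ (LinearMap.ker (Matrix.toLin'
      (G.adjMatrix ℝ - μ • (1 : Matrix V V ℝ)))) := by
  unfold SimpleGraph.eigMult
  congr!

lemma ker_rank_zero (h0 : Fintype.card V = 0) (μ : ℝ) :
    Module.finrank ℝ (LinearMap.ker (Matrix.toLin'
      (G.adjMatrix ℝ - μ • (1 : Matrix V V ℝ)))) = 0 := by
  have hle := Submodule.finrank_le (LinearMap.ker (Matrix.toLin'
      (G.adjMatrix ℝ - μ • (1 : Matrix V V ℝ))))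
  have hpi : Module.finrank ℝ (V → ℝ) = Fintype.card V := by
    simp [Module.finrank_pi]
  omega

lemma n1_rank0 (v : V) (hv : ∀ z : V, z = v) :
    Module.finrank ℝ (LinearMap.ker (Matrix.toLin'
      (G.adjMatrix ℝ - (0:ℝ) • (1 : Matrix V V ℝ)))) = 1 := by
  have h1 : Fintype.card V = 1 := Fintype.card_eq_one_iff.mpr ⟨v, hv⟩
  have hA : G.adjMatrix ℝ - (0:ℝ) • (1 : Matrix V V ℝ) = 0 := by
    ext i j
    rw [hv i, hv j]
    simp
  rw [hA]
  have : Matrix.toLin' (0 : Matrix V V ℝ) = 0 := map_zero _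
  rw [this, LinearMap.ker_zero]
  rw [finrank_top]
  simp [Module.finrank_pi, h1]

lemma n1_rank1 (v : V) (hv : ∀ z : V, z = v) :
    Module.finrank ℝ (LinearMap.ker (Matrix.toLin'
      (G.adjMatrix ℝ - (-1:ℝ) • (1 : Matrix V V ℝ)))) = 0 := by
  have hA : G.adjMatrix ℝ - (-1:ℝ) • (1 : Matrix V V ℝ) = 1 := by
    ext i j
    rw [hv i, hv j]
    simp [Matrix.one_apply]
  rw [hA, Matrix.toLin'_one, LinearMap.ker_id]
  simp

/-- degree comparison gives neighbourhood inclusion (threshold monotonicity). -/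
lemma incl_lemma (wt : V → ℝ)
    (hmono : ∀ a b c : V, wt a ≤ wt b → c ≠ b → G.Adj c a → G.Adj c b)
    (x y : V)
    (hdeg : (univ.filter (fun z => G.Adj x z)).card ≤ (univ.filter (fun z => G.Adj y z)).card) :
    ∀ c, G.Adj c x → c ≠ y → G.Adj c y := by
  by_cases hwxy : wt x ≤ wt y
  · exact fun c h hne => hmono x y c hwxy hne h
  · push_neg at hwxy
    have hsub : (univ.filter (fun z => G.Adj y z)).erase x
        ⊆ (univ.filter (fun z => G.Adj x z)).erase y := by
      intro z hz
      obtain ⟨hzx, hzf⟩ := Finset.mem_erase.mp hz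
      have hzy : G.Adj y z := (Finset.mem_filter.mp hzf).2
      have h2 : G.Adj z x := hmono y x z hwxy.le hzx hzy.symm
      exact Finset.mem_erase.mpr ⟨fun h => G.loopless.irrefl y (h ▸ hzy),
        Finset.mem_filter.mpr ⟨mem_univ z, h2.symm⟩⟩
    have heq : (univ.filter (fun z => G.Adj y z)).erase x
        = (univ.filter (fun z => G.Adj x z)).erase y := by
      refine Finset.eq_of_subset_of_card_le hsub ?_
      by_cases hadj : G.Adj x y
      · have hx_mem : x ∈ univ.filter (fun z => G.Adj y z) :=
          Finset.mem_filter.mpr ⟨mem_univ x, hadj.symm⟩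
        have hy_mem : y ∈ univ.filter (fun z => G.Adj x z) :=
          Finset.mem_filter.mpr ⟨mem_univ y, hadj⟩
        rw [Finset.card_erase_of_mem hx_mem, Finset.card_erase_of_mem hy_mem]
        omega
      · have hx_nmem : x ∉ univ.filter (fun z => G.Adj y z) := by
          simp only [Finset.mem_filter, mem_univ, true_and]
          exact fun h => hadj h.symm
        have hy_nmem : y ∉ univ.filter (fun z => G.Adj x z) := by
          simp only [Finset.mem_filter, mem_univ, true_and]
          exact hadj
        rw [Finset.erase_eq_of_notMem hx_nmem, Finset.erase_eq_of_notMem hy_nmem]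
        omega
    intro c h hne
    have hc : c ∈ (univ.filter (fun z => G.Adj x z)).erase y :=
      Finset.mem_erase.mpr ⟨hne, Finset.mem_filter.mpr ⟨mem_univ c, h.symm⟩⟩
    rw [← heq] at hc
    exact ((Finset.mem_filter.mp (Finset.mem_erase.mp hc).2).2).symm

/-- equal degrees give twins. -/
lemma twin_lemma (wt : V → ℝ)
    (hmono : ∀ a b c : V, wt a ≤ wt b → c ≠ b → G.Adj c a → G.Adj c b)
    (x y : V)
    (hdeg : (univ.filter (fun z => G.Adj x z)).card = (univ.filter (fun z => G.Adj y z)).card) :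
    ∀ z, z ≠ x → z ≠ y → (G.Adj z x ↔ G.Adj z y) :=
  fun z hzx hzy => ⟨fun h => incl_lemma G wt hmono x y hdeg.le z h hzy,
    fun h => incl_lemma G wt hmono y x hdeg.ge z h hzx⟩

lemma pigeon (h2 : 2 ≤ Fintype.card V) :
    ∃ a b : V, a ≠ b ∧ (univ.filter (fun z => G.Adj a z)).card
      = (univ.filter (fun z => G.Adj b z)).card := by
  by_contra hno
  push_neg at hno
  have hinj : Function.Injective (fun a : V => (univ.filter (fun z => G.Adj a z)).card) := by
    intro a b hab
    by_contra hne
    exact hno a b hne hab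
  have hsubn : ∀ a : V, univ.filter (fun z => G.Adj a z) ⊆ univ.erase a := by
    intro a z hz
    exact Finset.mem_erase.mpr
      ⟨fun h => G.loopless.irrefl a (h ▸ (Finset.mem_filter.mp hz).2), mem_univ z⟩
  have hlt : ∀ a : V, (univ.filter (fun z => G.Adj a z)).card < Fintype.card V := by
    intro a
    have := Finset.card_le_card (hsubn a)
    rw [Finset.card_erase_of_mem (mem_univ a), Finset.card_univ] at this
    omega
  have himg : univ.image (fun a : V => (univ.filter (fun z => G.Adj a z)).card)
      = Finset.range (Fintype.card V) := by
    refine Finset.eq_of_subset_of_card_le ?_ ?_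
    · intro k hk
      obtain ⟨a, _, ha⟩ := Finset.mem_image.mp hk
      exact Finset.mem_range.mpr (ha ▸ hlt a)
    · rw [Finset.card_range, Finset.card_image_of_injective _ hinj, Finset.card_univ]
  have h0 : (0 : ℕ) ∈ univ.image (fun a : V => (univ.filter (fun z => G.Adj a z)).card) := by
    rw [himg]; exact Finset.mem_range.mpr (by omega)
  have hn : (Fintype.card V - 1)
      ∈ univ.image (fun a : V => (univ.filter (fun z => G.Adj a z)).card) := by
    rw [himg]; exact Finset.mem_range.mpr (by omega)
  obtain ⟨a, _, ha⟩ := Finset.mem_image.mp h0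
  obtain ⟨b, _, hb⟩ := Finset.mem_image.mp hn
  have hab : a ≠ b := by
    intro h
    rw [h] at ha
    rw [ha] at hb
    omega
  have hfull : univ.filter (fun z => G.Adj b z) = univ.erase b := by
    refine Finset.eq_of_subset_of_card_le (hsubn b) ?_
    rw [Finset.card_erase_of_mem (mem_univ b), Finset.card_univ, hb]
  have hba : G.Adj b a := by
    have : a ∈ univ.filter (fun z => G.Adj b z) := by
      rw [hfull]
      exact Finset.mem_erase.mpr ⟨hab, mem_univ a⟩
    exact (Finset.mem_filter.mp this).2
  have : b ∈ univ.filter (fun z => G.Adj a z) :=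
    Finset.mem_filter.mpr ⟨mem_univ b, hba.symm⟩
  have hpos := Finset.card_pos.mpr ⟨b, this⟩
  omega

/-- full twins from partial twins plus non-adjacency. -/
lemma fulltwin_lemma (x y : V) (hnadj : ¬ G.Adj x y)
    (tw : ∀ z, z ≠ x → z ≠ y → (G.Adj z x ↔ G.Adj z y)) :
    ∀ z, G.Adj z x ↔ G.Adj z y := by
  intro z
  by_cases hzx : z = x
  · subst hzx
    exact iff_of_false (G.loopless.irrefl z) hnadj
  · by_cases hzy : z = y
    · subst hzy
      exact iff_of_false (fun h => hnadj h.symm) (G.loopless.irrefl z)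
    · exact tw z hzx hzy

/-- the combinatorial selection: two distinct equal-degree pairs give a usable
false-twin or true-twin configuration. -/
lemma comb_lemma (wt : V → ℝ)
    (hmono : ∀ a b c : V, wt a ≤ wt b → c ≠ b → G.Adj c a → G.Adj c b)
    (p q : V) (hpq : p ≠ q)
    (hdpq : (univ.filter (fun z => G.Adj p z)).card = (univ.filter (fun z => G.Adj q z)).card)
    (a b : V) (hab : a ≠ b)
    (hdab : (univ.filter (fun z => G.Adj a z)).card = (univ.filter (fun z => G.Adj b z)).card)
    (hne : ({a, b} : Set V) ≠ ({p, q} : Set V)) :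
    (∃ u v z0 : V, u ≠ v ∧ ¬ G.Adj u v ∧ (∀ z, G.Adj z u ↔ G.Adj z v) ∧
      z0 ≠ u ∧ z0 ≠ v ∧ ¬ G.Adj z0 u ∧ (∀ c, G.Adj c u → G.Adj c z0))
    ∨ (∃ u v z0 : V, u ≠ v ∧ G.Adj u v ∧
      (∀ z, z ≠ u → z ≠ v → (G.Adj z u ↔ G.Adj z v)) ∧
      z0 ≠ u ∧ z0 ≠ v ∧ G.Adj z0 u ∧ (∀ z, z ≠ u → G.Adj z z0 → G.Adj z u)) := by
  have triple : ∀ x y r : V, x ≠ y → x ≠ r → y ≠ r →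
      (univ.filter (fun z => G.Adj x z)).card = (univ.filter (fun z => G.Adj y z)).card →
      (univ.filter (fun z => G.Adj x z)).card = (univ.filter (fun z => G.Adj r z)).card →
      ((∃ u v z0 : V, u ≠ v ∧ ¬ G.Adj u v ∧ (∀ z, G.Adj z u ↔ G.Adj z v) ∧
        z0 ≠ u ∧ z0 ≠ v ∧ ¬ G.Adj z0 u ∧ (∀ c, G.Adj c u → G.Adj c z0))
      ∨ (∃ u v z0 : V, u ≠ v ∧ G.Adj u v ∧
        (∀ z, z ≠ u → z ≠ v → (G.Adj z u ↔ G.Adj z v)) ∧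
        z0 ≠ u ∧ z0 ≠ v ∧ G.Adj z0 u ∧ (∀ z, z ≠ u → G.Adj z z0 → G.Adj z u))) := by
    intro x y r hxy hxr hyr hdxy hdxr
    have hdyr : (univ.filter (fun z => G.Adj y z)).card
        = (univ.filter (fun z => G.Adj r z)).card := by omega
    have tw_xy := twin_lemma G wt hmono x y hdxy
    have tw_xr := twin_lemma G wt hmono x r hdxr
    by_cases hA : G.Adj x y
    · by_cases hB : G.Adj r x
      · exact Or.inr ⟨x, y, r, hxy, hA, tw_xy, Ne.symm hxr, Ne.symm hyr, hB,
          fun z hz h => incl_lemma G wt hmono r x hdxr.ge z h hz⟩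
      · have hrY : ¬ G.Adj r y := fun h => hB ((tw_xy r (Ne.symm hxr) (Ne.symm hyr)).mpr h)
        have htw : ∀ z, G.Adj z r ↔ G.Adj z x :=
          fulltwin_lemma G r x (fun h => hB h) (fun z hzr hzx => (tw_xr z hzx hzr).symm)
        refine Or.inl ⟨r, x, y, Ne.symm hxr, fun h => hB h, htw, hyr, Ne.symm hxy,
          fun h => hrY h.symm, ?_⟩
        intro c h
        exact incl_lemma G wt hmono r y hdyr.ge c h (fun hcy => hrY (hcy ▸ h).symm)
    · by_cases hB : G.Adj r x
      · have hry : G.Adj r y := (tw_xy r (Ne.symm hxr) (Ne.symm hyr)).mp hB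
        have htw : ∀ z, z ≠ r → z ≠ x → (G.Adj z r ↔ G.Adj z x) :=
          fun z hzr hzx => (tw_xr z hzx hzr).symm
        exact Or.inr ⟨r, x, y, Ne.symm hxr, hB, htw, hyr, Ne.symm hxy, hry.symm,
          fun z hz h => incl_lemma G wt hmono y r hdyr.le z h hz⟩
      · have htw : ∀ z, G.Adj z x ↔ G.Adj z y := fulltwin_lemma G x y hA tw_xy
        refine Or.inl ⟨x, y, r, hxy, hA, htw, Ne.symm hxr, Ne.symm hyr, hB, ?_⟩
        intro c h
        exact incl_lemma G wt hmono x r hdxr.le c h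
          (fun hcr => hB ((hcr ▸ h : G.Adj r x)))
  have disj : ∀ p' q' a' b' : V, p' ≠ q' → a' ≠ b' → p' ≠ a' → p' ≠ b' → q' ≠ a' → q' ≠ b' →
      (univ.filter (fun z => G.Adj p' z)).card = (univ.filter (fun z => G.Adj q' z)).card →
      (univ.filter (fun z => G.Adj a' z)).card = (univ.filter (fun z => G.Adj b' z)).card →
      (univ.filter (fun z => G.Adj p' z)).card < (univ.filter (fun z => G.Adj a' z)).card →
      ((∃ u v z0 : V, u ≠ v ∧ ¬ G.Adj u v ∧ (∀ z, G.Adj z u ↔ G.Adj z v) ∧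
        z0 ≠ u ∧ z0 ≠ v ∧ ¬ G.Adj z0 u ∧ (∀ c, G.Adj c u → G.Adj c z0))
      ∨ (∃ u v z0 : V, u ≠ v ∧ G.Adj u v ∧
        (∀ z, z ≠ u → z ≠ v → (G.Adj z u ↔ G.Adj z v)) ∧
        z0 ≠ u ∧ z0 ≠ v ∧ G.Adj z0 u ∧ (∀ z, z ≠ u → G.Adj z z0 → G.Adj z u))) := by
    intro p q a b hpq hab hpa hpb hqa hqb hdpq hdab hlt
    have hpble : (univ.filter (fun z => G.Adj p z)).card
        ≤ (univ.filter (fun z => G.Adj b z)).card := by omega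
    by_cases hA : G.Adj p a
    · by_cases hB : G.Adj a b
      · exact Or.inr ⟨a, b, p, hab, hB, twin_lemma G wt hmono a b hdab, hpa, hpb,
          hA, fun z hz h => incl_lemma G wt hmono p a hlt.le z h hz⟩
      · exact absurd (incl_lemma G wt hmono p b hpble a hA.symm hab) hB
    · by_cases hB : G.Adj p q
      · exfalso
        have hqa' : G.Adj q a := incl_lemma G wt hmono p a hlt.le q hB.symm hqa
        exact hA (((twin_lemma G wt hmono p q hdpq) a hpa.symm hqa.symm).mpr hqa'.symm).symm
      · have htw : ∀ z, G.Adj z p ↔ G.Adj z q :=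
          fulltwin_lemma G p q hB (twin_lemma G wt hmono p q hdpq)
        refine Or.inl ⟨p, q, a, hpq, hB, htw, hpa.symm, hqa.symm, fun h => hA h.symm, ?_⟩
        intro c h
        exact incl_lemma G wt hmono p a hlt.le c h (fun hca => hA ((hca ▸ h : G.Adj a p)).symm)
    -- end disj
  by_cases hap : a = p
  · have hbq : b ≠ q := fun h => hne (by rw [hap, h])
    have hbp : b ≠ p := fun h => hab (by rw [hap, h])
    exact triple p q b hpq (Ne.symm hbp) (Ne.symm hbq) hdpq (by rw [← hap]; omega)
  · by_cases haq : a = q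
    · have hbp : b ≠ p := fun h => hne (by rw [haq, h]; exact Set.pair_comm q p)
      have hbq : b ≠ q := fun h => hab (by rw [haq, h])
      exact triple p q b hpq (Ne.symm hbp) (Ne.symm hbq) hdpq (by rw [haq] at hdab; omega)
    · by_cases hbp : b = p
      · have haq' : a ≠ q := fun h => hne (by rw [hbp, h]; exact Set.pair_comm q p)
        exact triple p q a hpq (Ne.symm hap) (Ne.symm haq') hdpq (by rw [← hbp]; omega)
      · by_cases hbq : b = q
        · exact triple p q a hpq (Ne.symm hap) (Ne.symm haq) hdpq (by rw [hbq] at hdab; omega)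
        · by_cases hda : (univ.filter (fun z => G.Adj a z)).card
              = (univ.filter (fun z => G.Adj p z)).card
          · exact triple p q a hpq (Ne.symm hap) (Ne.symm haq) hdpq hda.symm
          · rcases Nat.lt_or_ge (univ.filter (fun z => G.Adj p z)).card
                (univ.filter (fun z => G.Adj a z)).card with hlt | hge
            · exact disj p q a b hpq hab (Ne.symm hap) (Ne.symm hbp) (Ne.symm haq)
                (Ne.symm hbq) hdpq hdab hlt
            · have hlt' : (univ.filter (fun z => G.Adj a z)).card
                  < (univ.filter (fun z => G.Adj p z)).card := by omega
              exact disj a b p q hab hpq hap haq hbp hbq hdab hdpq hlt'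


lemma degree_eq_filter (z : V) (i : Fintype (G.neighborSet z)) :
    @SimpleGraph.degree V G z i = (univ.filter (fun y => G.Adj z y)).card := by
  have h : (@SimpleGraph.neighborFinset V G z i) = univ.filter (fun y => G.Adj z y) := by
    ext y
    simp [SimpleGraph.mem_neighborFinset]
  unfold SimpleGraph.degree
  rw [h]


end Final

theorem threshold_not_antiRegular_exists_vertex {V : Type*} [Fintype V] [DecidableEq V]
    (G : SimpleGraph V) (hV : 1 ≤ Fintype.card V) (hG : G.IsThreshold)
    (hnar : ¬ G.IsAntiRegular) :
    ∃ v : V,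
      (G.eigMult 0 = (G.induce {w | w ≠ v}).eigMult 0 + 1 ∧
        G.eigMult (-1) = (G.induce {w | w ≠ v}).eigMult (-1)) ∨
      (G.eigMult 0 = (G.induce {w | w ≠ v}).eigMult 0 ∧
        G.eigMult (-1) = (G.induce {w | w ≠ v}).eigMult (-1) + 1) := by
  obtain ⟨S, w, hw⟩ := hG
  haveI : DecidableRel G.Adj := Classical.decRel _
  have hmono : ∀ a b c : V, w a ≤ w b → c ≠ b → G.Adj c a → G.Adj c b := by
    intro a b c hle hne h
    have h1 := (hw c a (G.ne_of_adj h)).mp h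
    exact (hw c b hne).mpr (by linarith)
  by_cases h1 : Fintype.card V = 1
  · obtain ⟨v0, hv0⟩ := Fintype.card_eq_one_iff.mp h1
    have hcard0 : Fintype.card ↥{w : V | w ≠ v0} = 0 := by
      rw [Fintype.card_eq_zero_iff]
      exact ⟨fun w => w.2 (hv0 ↑w)⟩
    refine ⟨v0, Or.inl ⟨?_, ?_⟩⟩
    · rw [eigMult_eq G 0, eigMult_eq (G.induce {w : V | w ≠ v0}) 0,
        ker_rank_zero _ hcard0, n1_rank0 G v0 hv0]
    · rw [eigMult_eq G (-1), eigMult_eq (G.induce {w : V | w ≠ v0}) (-1),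
        ker_rank_zero _ hcard0, n1_rank1 G v0 hv0]
  · have h2 : 2 ≤ Fintype.card V := by omega
    obtain ⟨p, q, hpq, hdpq⟩ := pigeon G h2
    have hsecond : ∃ a b : V, a ≠ b ∧ (univ.filter (fun z => G.Adj a z)).card
        = (univ.filter (fun z => G.Adj b z)).card ∧ ({a, b} : Set V) ≠ ({p, q} : Set V) := by
      by_contra hno
      push_neg at hno
      refine hnar ?_
      unfold SimpleGraph.IsAntiRegular
      refine ⟨h2, p, q, hpq, ?_, ?_⟩
      · rw [degree_eq_filter, degree_eq_filter]
        exact hdpq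
      · intro a b hab hd
        refine hno a b hab ?_
        rw [degree_eq_filter, degree_eq_filter] at hd
        exact hd
    obtain ⟨a, b, hab, hdab, hne⟩ := hsecond
    rcases comb_lemma G w hmono p q hpq hdpq a b hab hdab hne with
      ⟨u, v, z0, huv, hnadj, htwin, hz0u, hz0v, hz0na, hz0sub⟩ |
      ⟨u, v, z0, huv, hadj, htwin, hz0u, hz0v, hz0adj, hz0sub⟩
    · haveI : DecidableRel (G.induce {w : V | w ≠ v}).Adj :=
        fun x y => decidable_of_iff (G.Adj ↑x ↑y) (by simp)
      have hglem := glem_false G v w hmono u huv hnadj htwin z0 hz0u hz0v hz0na hz0sub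
      refine ⟨v, Or.inl ⟨?_, ?_⟩⟩
      · rw [eigMult_eq G 0, eigMult_eq (G.induce {w : V | w ≠ v}) 0]
        exact hglem.1
      · rw [eigMult_eq G (-1), eigMult_eq (G.induce {w : V | w ≠ v}) (-1)]
        exact hglem.2
    · haveI : DecidableRel (G.induce {w : V | w ≠ v}).Adj :=
        fun x y => decidable_of_iff (G.Adj ↑x ↑y) (by simp)
      have hglem := glem_true G v w hmono u huv hadj htwin z0 hz0u hz0v hz0adj hz0sub
      refine ⟨v, Or.inr ⟨?_, ?_⟩⟩
      · rw [eigMult_eq G 0, eigMult_eq (G.induce {w : V | w ≠ v}) 0]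
        exact hglem.1
      · rw [eigMult_eq G (-1), eigMult_eq (G.induce {w : V | w ≠ v}) (-1)]
        exact hglem.2
end

section
/- Let A be a connected anti-regular graph on n ≥ 2 vertices. Then every eigenvalue of the adjacency matrix of A that is strictly less than −1 is strictly less than (−1−√2)/2, and every positive eigenvalue of the adjacency matrix of A is strictly greater than (−1+√2)/2. -/
namespace AntiRegularAux
set_option linter.unusedSectionVars false

open Finset SimpleGraph


variable {V : Type*} [Fintype V] [DecidableEq V]

lemma adj_of_degree_eq (G : SimpleGraph V) [DecidableRel G.Adj] {w : V}
    (h : G.degree w = Fintype.card V - 1) {v : V} (hv : v ≠ w) : G.Adj w v := by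
  have hsub : G.neighborFinset w ⊆ univ.erase w := by
    intro u hu
    rw [mem_neighborFinset] at hu
    exact mem_erase.2 ⟨hu.ne', mem_univ _⟩
  have hcard : (univ.erase w).card ≤ (G.neighborFinset w).card := by
    rw [card_erase_of_mem (mem_univ _), card_univ, G.card_neighborFinset_eq_degree, h]
  have heq := Finset.eq_of_subset_of_card_le hsub hcard
  have : v ∈ G.neighborFinset w := by rw [heq]; exact mem_erase.2 ⟨hv, mem_univ _⟩
  simpa [mem_neighborFinset] using this

lemma degree_pos_of_connected (G : SimpleGraph V) [DecidableRel G.Adj]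
    (hc : G.Connected) (h2 : 2 ≤ Fintype.card V) (v : V) : 0 < G.degree v := by
  rw [G.degree_pos_iff_exists_adj]
  obtain ⟨u, hu⟩ := Fintype.exists_ne_of_one_lt_card h2 v
  obtain ⟨walk⟩ := hc.preconnected v u
  cases walk with
  | nil => exact absurd rfl hu
  | cons h p => exact ⟨_, h⟩

lemma connected_of_dominating (G : SimpleGraph V) [Nonempty V] {c : V}
    (h : ∀ v, v ≠ c → G.Adj c v) : G.Connected := by
  rw [connected_iff]
  refine ⟨fun u v => ?_, inferInstance⟩
  have hr : ∀ z, G.Reachable c z := by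
    intro z
    by_cases hz : z = c
    · subst hz; exact Reachable.refl _
    · exact (h z hz).reachable
  exact (hr u).symm.trans (hr v)

lemma card_filter_subtype (s : Finset V) (P : V → Prop) [DecidablePred P] :
    (Finset.univ.filter (fun (u : {x // x ∈ s}) => P u.1)).card = (s.filter P).card := by
  refine Finset.card_bij (fun u _ => u.1) ?_ ?_ ?_
  · intro a ha
    simp only [mem_filter, mem_univ, true_and] at ha
    exact mem_filter.2 ⟨a.2, ha⟩
  · intro a _ b _ h; exact Subtype.ext h
  · intro b hb
    simp only [mem_filter] at hb
    exact ⟨⟨b, hb.1⟩, mem_filter.2 ⟨mem_univ _, hb.2⟩, rfl⟩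



lemma fiber_cards (G : SimpleGraph V) [DecidableRel G.Adj] (hc : G.Connected)
    (h2 : 2 ≤ Fintype.card V) {u₀ v₀ : V} (hne : u₀ ≠ v₀)
    (hdeq : G.degree u₀ = G.degree v₀)
    (huniq : ∀ a b : V, a ≠ b → G.degree a = G.degree b → ({a, b} : Set V) = {u₀, v₀}) :
    ∀ k ∈ Icc 1 (Fintype.card V - 1),
      (univ.filter (fun v => G.degree v = k)).card =
        if k = G.degree u₀ then 2 else 1 := by
  classical
  set n := Fintype.card V with hn
  have hdegmem : ∀ v : V, G.degree v ∈ Icc 1 (n - 1) := by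
    intro v
    exact mem_Icc.2 ⟨degree_pos_of_connected G hc h2 v,
      Nat.le_sub_one_of_lt (G.degree_lt_card_verts v)⟩
  obtain ⟨r, hr⟩ : ∃ r, G.degree u₀ = r := ⟨_, rfl⟩
  rw [hr]
  have hdeq' : G.degree v₀ = r := by rw [← hdeq, hr]
  have hmem_pair : ∀ c : V, G.degree c = r → c = u₀ ∨ c = v₀ := by
    intro c hdc
    by_cases hc1 : c = u₀
    · exact Or.inl hc1
    · have := huniq c u₀ hc1 (hdc.trans hr.symm)
      have hcmem : c ∈ ({c, u₀} : Set V) := by simp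
      rw [this] at hcmem
      simpa using hcmem
  have hfib_r : univ.filter (fun v => G.degree v = r) = {u₀, v₀} := by
    ext c
    simp only [mem_filter, mem_univ, true_and, mem_insert, mem_singleton]
    constructor
    · exact hmem_pair c
    · rintro (rfl | rfl)
      · exact hr
      · exact hdeq'
  have hcard_r : (univ.filter (fun v => G.degree v = r)).card = 2 := by
    rw [hfib_r]; exact card_pair hne
  have hle_one : ∀ k, k ≠ r → (univ.filter (fun v => G.degree v = k)).card ≤ 1 := by
    intro k hk
    refine card_le_one.2 ?_
    intro a ha b hb
    simp only [mem_filter, mem_univ, true_and] at ha hb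
    by_contra hab
    have := huniq a b hab (ha.trans hb.symm)
    have hamem : a ∈ ({a, b} : Set V) := by simp
    rw [this] at hamem
    rcases hamem with h1 | h1
    · exact hk (by rw [← ha, h1, hr])
    · exact hk (by rw [← ha, h1, hdeq'])
  have hsum : ∑ k ∈ Icc 1 (n - 1), (univ.filter (fun v => G.degree v = k)).card = n := by
    rw [← Finset.card_eq_sum_card_fiberwise (fun v _ => hdegmem v), card_univ]
  have hrIcc : r ∈ Icc 1 (n - 1) := hr ▸ hdegmem u₀
  have hsum' : ∑ k ∈ (Icc 1 (n - 1)).erase r,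
      (univ.filter (fun v => G.degree v = k)).card = n - 2 := by
    have h := Finset.add_sum_erase _ (fun k => (univ.filter (fun v => G.degree v = k)).card) hrIcc
    omega
  have hcardIcc : (Icc 1 (n - 1)).card = n - 1 := by
    rw [Nat.card_Icc]; omega
  intro k hk
  by_cases hkr : k = r
  · simp [hkr, hcard_r]
  · simp only [hkr, if_false]
    by_contra hne1
    have hk0 : (univ.filter (fun v => G.degree v = k)).card = 0 := by
      have := hle_one k hkr; omega
    have hkmem : k ∈ (Icc 1 (n - 1)).erase r := mem_erase.2 ⟨hkr, hk⟩
    have h1 : ∑ j ∈ ((Icc 1 (n - 1)).erase r).erase k,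
        (univ.filter (fun v => G.degree v = j)).card = n - 2 := by
      have h := Finset.add_sum_erase _ (fun j => (univ.filter (fun v => G.degree v = j)).card) hkmem
      omega
    have h2' : ∑ j ∈ ((Icc 1 (n - 1)).erase r).erase k,
        (univ.filter (fun v => G.degree v = j)).card ≤ (((Icc 1 (n - 1)).erase r).erase k).card * 1 := by
      refine Finset.sum_le_card_nsmul _ _ 1 ?_
      intro j hj
      exact hle_one j (mem_erase.1 (mem_erase.1 hj).2).1
    have hc1 : (((Icc 1 (n - 1)).erase r).erase k).card = n - 3 := by
      rw [card_erase_of_mem hkmem, card_erase_of_mem hrIcc, hcardIcc]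
      omega
    have hn3 : 3 ≤ n := by
      have : 1 ≤ ((Icc 1 (n-1)).erase r).card := card_pos.2 ⟨k, hkmem⟩
      rw [card_erase_of_mem hrIcc, hcardIcc] at this
      omega
    omega

lemma pendant_unique (G : SimpleGraph V) [DecidableRel G.Adj] {a w c : V}
    (h1 : G.degree a = 1) (haw : G.Adj a w) (hac : G.Adj a c) : c = w := by
  have h1' : (G.neighborFinset a).card = 1 := by rwa [G.card_neighborFinset_eq_degree]
  obtain ⟨y, hy⟩ := card_eq_one.1 h1'
  have hw : w ∈ G.neighborFinset a := by rwa [mem_neighborFinset]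
  have hcc : c ∈ G.neighborFinset a := by rwa [mem_neighborFinset]
  rw [hy, mem_singleton] at hw hcc
  rw [hcc, hw]

theorem antireg_rule : ∀ (n : ℕ), ∀ {W : Type u} [Fintype W] [DecidableEq W]
    (G : SimpleGraph W), ∀ [DecidableRel G.Adj], Fintype.card W = n → G.Connected →
    (∃ u v : W, u ≠ v ∧ G.degree u = G.degree v ∧
      ∀ a b : W, a ≠ b → G.degree a = G.degree b → ({a, b} : Set W) = {u, v}) →
    ∀ a b : W, G.Adj a b ↔ (a ≠ b ∧ n ≤ G.degree a + G.degree b) := by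
  intro n
  induction n using Nat.strong_induction_on with
  | _ n IH =>
  intro W _ _ G _ hn hc har
  obtain ⟨u₀, v₀, hne₀, hdeq₀, huniq⟩ := har
  have h2 : 2 ≤ n := by
    rw [← hn]; exact Fintype.one_lt_card_iff_nontrivial.2 ⟨⟨u₀, v₀, hne₀⟩⟩
  have h2' : 2 ≤ Fintype.card W := hn ▸ h2
  have hdlo : ∀ v, 1 ≤ G.degree v := fun v => degree_pos_of_connected G hc h2' v
  have hdhi : ∀ v, G.degree v ≤ n - 1 := fun v => by
    have := G.degree_lt_card_verts v; omega
  have hfib := fiber_cards G hc h2' hne₀ hdeq₀ huniq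
  rw [hn] at hfib
  obtain ⟨r, hr⟩ : ∃ r, G.degree u₀ = r := ⟨_, rfl⟩
  rw [hr] at hfib
  have hv₀r : G.degree v₀ = r := by rw [← hdeq₀, hr]
  have hpick : ∀ k, 1 ≤ k → k ≤ n - 1 → ∃ v, G.degree v = k := by
    intro k hk1 hk2
    have h := hfib k (mem_Icc.2 ⟨hk1, hk2⟩)
    have hpos : 0 < (univ.filter (fun v => G.degree v = k)).card := by
      rw [h]; split <;> omega
    obtain ⟨v, hv⟩ := card_pos.1 hpos
    exact ⟨v, (mem_filter.1 hv).2⟩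
  have hr1 : 1 ≤ r := hr ▸ hdlo u₀
  have hr2 : r ≤ n - 1 := hr ▸ hdhi u₀
  -- the dominating vertex
  obtain ⟨w, hw⟩ := hpick (n-1) (by omega) le_rfl
  have hwdom : ∀ v, v ≠ w → G.Adj w v := by
    intro v hv
    exact adj_of_degree_eq G (by rw [hw, hn]) hv
  -- r is not n-1, when n ≥ 3
  have hrne : 3 ≤ n → r ≠ n - 1 := by
    intro h3 hrn
    have hu₀d : G.degree u₀ = n - 1 := by rw [hr, hrn]
    have hv₀d : G.degree v₀ = n - 1 := by rw [hv₀r, hrn]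
    obtain ⟨z, hz⟩ := hpick 1 le_rfl (by omega)
    have hz1 : z ≠ u₀ := fun h => by rw [h, hu₀d] at hz; omega
    have hz2 : z ≠ v₀ := fun h => by rw [h, hv₀d] at hz; omega
    have ha1 : G.Adj z u₀ := (adj_of_degree_eq G (by rw [hu₀d, hn]) hz1).symm
    have ha2 : G.Adj z v₀ := (adj_of_degree_eq G (by rw [hv₀d, hn]) hz2).symm
    have hsub : ({u₀, v₀} : Finset W) ⊆ G.neighborFinset z := by
      intro c hcmem
      rw [mem_insert, mem_singleton] at hcmem
      rw [mem_neighborFinset]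
      rcases hcmem with rfl | rfl
      · exact ha1
      · exact ha2
    have := card_le_card hsub
    rw [card_pair hne₀, G.card_neighborFinset_eq_degree, hz] at this
    omega
  -- r is not 1, when n ≥ 4
  have hrne1 : 4 ≤ n → r ≠ 1 := by
    intro h4 hre
    have hu₀d : G.degree u₀ = 1 := by rw [hr, hre]
    have hv₀d : G.degree v₀ = 1 := by rw [hv₀r, hre]
    obtain ⟨z, hz⟩ := hpick (n-2) (by omega) (by omega)
    have hz1 : z ≠ u₀ := fun h => by rw [h, hu₀d] at hz; omega
    have hz2 : z ≠ v₀ := fun h => by rw [h, hv₀d] at hz; omega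
    have hzw : z ≠ w := fun h => by rw [h, hw] at hz; omega
    have hnadj : G.Adj z u₀ ∨ G.Adj z v₀ := by
      by_contra hcon
      push_neg at hcon
      have hsub : G.neighborFinset z ⊆ ((univ.erase z).erase u₀).erase v₀ := by
        intro c hcmem
        rw [mem_neighborFinset] at hcmem
        refine mem_erase.2 ⟨?_, mem_erase.2 ⟨?_, mem_erase.2 ⟨?_, mem_univ _⟩⟩⟩
        · rintro rfl; exact hcon.2 hcmem
        · rintro rfl; exact hcon.1 hcmem
        · rintro rfl; exact G.irrefl hcmem
      have hcle := card_le_card hsub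
      rw [G.card_neighborFinset_eq_degree, hz] at hcle
      have hc3 : (((univ.erase z).erase u₀).erase v₀).card = n - 3 := by
        rw [card_erase_of_mem, card_erase_of_mem, card_erase_of_mem (mem_univ _), card_univ, hn]
        · omega
        · exact mem_erase.2 ⟨hz1.symm, mem_univ _⟩
        · exact mem_erase.2 ⟨hne₀.symm, mem_erase.2 ⟨hz2.symm, mem_univ _⟩⟩
      omega
    have key : ∀ y, G.degree y = 1 → y ≠ z → y ≠ w → ¬ G.Adj z y := by
      intro y hy hyz hyw hadj
      have h1 : G.Adj y w := (hwdom y hyw).symm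
      have h2 : G.Adj y z := hadj.symm
      have := pendant_unique G hy h1 h2
      exact hzw this
    rcases hnadj with h | h
    · exact key u₀ hu₀d hz1.symm (fun hh => by rw [hh, hw] at hu₀d; omega) h
    · exact key v₀ hv₀d hz2.symm (fun hh => by rw [hh, hw] at hv₀d; omega) h
  have hwuniq : 3 ≤ n → ∀ v, G.degree v = n - 1 → v = w := by
    intro h3 v hv
    have hcard := hfib (n-1) (mem_Icc.2 ⟨by omega, le_rfl⟩)
    rw [if_neg (fun hh => (hrne h3) hh.symm)] at hcard
    have hvmem : v ∈ univ.filter (fun x => G.degree x = n - 1) := mem_filter.2 ⟨mem_univ _, hv⟩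
    have hwmem : w ∈ univ.filter (fun x => G.degree x = n - 1) := mem_filter.2 ⟨mem_univ _, hw⟩
    exact card_le_one.1 (le_of_eq hcard) _ hvmem _ hwmem
  by_cases hn2 : n = 2
  · intro a b
    by_cases hab : a = b
    · subst hab; simp
    · have key : ∀ x y : W, x ≠ y → x = w → G.Adj x y := by
        rintro x y hxy rfl
        exact hwdom y (Ne.symm hxy)
      have hadj : G.Adj a b := by
        rcases (show a = w ∨ b = w by
          by_contra hcon
          push_neg at hcon
          have h3 : 2 < Fintype.card W := Fintype.two_lt_card_iff.2 ⟨a, b, w, hab, hcon.1, hcon.2⟩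
          omega) with h | h
        · exact key a b hab h
        · exact (key b a (Ne.symm hab) h).symm
      exact iff_of_true hadj ⟨hab, by have := hdlo a; have := hdlo b; omega⟩
  by_cases hn3 : n = 3
  · have hfib1 : ∀ v, v ≠ w → G.degree v = 1 := by
      intro v hvw
      have h1 := hdlo v
      have h2 := hdhi v
      by_contra hne1
      have : G.degree v = n - 1 := by omega
      exact hvw (hwuniq (by omega) v this)
    intro a b
    by_cases hab : a = b
    · subst hab; simp
    · by_cases haw : a = w
      · refine iff_of_true ?_ ⟨hab, ?_⟩
        · rw [haw]; exact hwdom b (fun hh => hab (by rw [haw, hh]))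
        · rw [haw, hw]; have := hdlo b; omega
      · by_cases hbw : b = w
        · refine iff_of_true ?_ ⟨hab, ?_⟩
          · rw [hbw]; exact (hwdom a (fun hh => hab (by rw [hbw, hh]))).symm
          · rw [hbw, hw]; have := hdlo a; omega
        · have hda := hfib1 a haw
          have hdb := hfib1 b hbw
          refine iff_of_false ?_ ?_
          · intro hadj
            exact hbw (pendant_unique G hda ((hwdom a haw).symm) hadj)
          · rintro ⟨-, hge⟩
            rw [hda, hdb] at hge; omega
  -- main case : 4 ≤ n
  have h4 : 4 ≤ n := by omega
  have hrlow : 2 ≤ r := by have := hrne1 h4; omega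
  have hrhigh : r ≤ n - 2 := by have := hrne (by omega); omega
  obtain ⟨p, hp⟩ := hpick 1 le_rfl (by omega)
  have hpw : p ≠ w := fun h => by rw [h, hw] at hp; omega
  have hpuniq : ∀ c, G.Adj p c → c = w := by
    intro c hcadj
    exact pendant_unique G hp ((hwdom p hpw).symm) hcadj
  have hwuniq' := hwuniq (by omega)
  have hdeg_le : ∀ v, v ≠ w → G.degree v ≤ n - 2 := by
    intro v hvw
    have := hdhi v
    by_contra hcon
    exact hvw (hwuniq' v (by omega))
  set s : Finset W := (univ.erase w).erase p with hs
  have hmem_s : ∀ c : W, c ∈ s ↔ (c ≠ p ∧ c ≠ w) := by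
    intro c; rw [hs]
    simp only [mem_erase, mem_univ, and_true]
  have hcard_s : s.card = n - 2 := by
    rw [hs, card_erase_of_mem (mem_erase.2 ⟨hpw, mem_univ _⟩),
      card_erase_of_mem (mem_univ _), card_univ, hn]
    omega
  let SS := {x // x ∈ s}
  let G' : SimpleGraph SS := G.comap (Subtype.val)
  letI : DecidableRel G'.Adj := fun a b => (inferInstance : Decidable (G.Adj a.1 b.1))
  have hcardSS : Fintype.card SS = n - 2 := by
    rw [Fintype.card_coe, hcard_s]
  have hnadjp : ∀ c : W, c ≠ w → ¬ G.Adj c p := by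
    intro c hcw hadj
    exact hcw (hpuniq c hadj.symm)
  have hdeg0 : ∀ a : SS, G'.degree a = (s.filter (fun b => G.Adj a.1 b)).card := by
    intro a
    rw [← card_neighborFinset_eq_degree]
    refine Finset.card_bij (fun b _ => b.1) ?_ ?_ ?_
    · intro b hb
      rw [mem_neighborFinset] at hb
      exact mem_filter.2 ⟨b.2, hb⟩
    · intro a1 _ b1 _ hh
      exact Subtype.ext hh
    · intro b hb
      rw [mem_filter] at hb
      exact ⟨⟨b, hb.1⟩, by rw [mem_neighborFinset]; exact hb.2, rfl⟩
  have hdeg' : ∀ a : SS, G'.degree a = G.degree a.1 - 1 := by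
    intro a
    have haw : a.1 ≠ w := ((hmem_s a.1).1 a.2).2
    have hap : a.1 ≠ p := ((hmem_s a.1).1 a.2).1
    have heq : s.filter (fun b => G.Adj a.1 b) = (univ.filter (fun b => G.Adj a.1 b)).erase w := by
      ext c
      simp only [mem_filter, mem_erase, mem_univ, true_and, hmem_s]
      constructor
      · rintro ⟨⟨hcp, hcw⟩, hadj⟩
        exact ⟨hcw, hadj⟩
      · rintro ⟨hcw, hadj⟩
        refine ⟨⟨?_, hcw⟩, hadj⟩
        rintro rfl
        exact hnadjp a.1 haw hadj
    rw [hdeg0, heq, card_erase_of_mem (mem_filter.2 ⟨mem_univ _, (hwdom a.1 haw).symm⟩),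
      ← neighborFinset_eq_filter, card_neighborFinset_eq_degree]
  obtain ⟨z, hz⟩ := hpick (n-2) (by omega) (by omega)
  have hzw : z ≠ w := fun h => by rw [h, hw] at hz; omega
  have hzp : z ≠ p := fun h => by rw [h, hp] at hz; omega
  have hzs : z ∈ s := (hmem_s z).2 ⟨hzp, hzw⟩
  haveI : Nonempty SS := ⟨⟨z, hzs⟩⟩
  have hzdom : ∀ v : SS, v ≠ ⟨z, hzs⟩ → G'.Adj ⟨z, hzs⟩ v := by
    intro v hv
    refine adj_of_degree_eq G' ?_ hv
    rw [hdeg', hcardSS]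
    show G.degree z - 1 = n - 2 - 1
    rw [hz]
  have hconn' : G'.Connected := connected_of_dominating G' hzdom
  have hu₀w : u₀ ≠ w := by intro h; rw [h, hw] at hr; omega
  have hu₀p : u₀ ≠ p := by intro h; rw [h, hp] at hr; omega
  have hv₀w : v₀ ≠ w := by intro h; rw [h, hw] at hv₀r; omega
  have hv₀p : v₀ ≠ p := by intro h; rw [h, hp] at hv₀r; omega
  have hu₀s : u₀ ∈ s := (hmem_s u₀).2 ⟨hu₀p, hu₀w⟩
  have hv₀s : v₀ ∈ s := (hmem_s v₀).2 ⟨hv₀p, hv₀w⟩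
  have har' : ∃ u v : SS, u ≠ v ∧ G'.degree u = G'.degree v ∧
      ∀ a b : SS, a ≠ b → G'.degree a = G'.degree b → ({a, b} : Set SS) = {u, v} := by
    refine ⟨⟨u₀, hu₀s⟩, ⟨v₀, hv₀s⟩, fun h => hne₀ (congrArg Subtype.val h), ?_, ?_⟩
    · rw [hdeg', hdeg']
      show G.degree u₀ - 1 = G.degree v₀ - 1
      rw [hr, hv₀r]
    · intro a b hab hdab
      have hdab' : G.degree a.1 = G.degree b.1 := by
        have e1 := hdeg' a
        have e2 := hdeg' b
        have := hdlo a.1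
        have := hdlo b.1
        omega
      have hset := huniq a.1 b.1 (fun h => hab (Subtype.ext h)) hdab'
      ext c
      have h3 := Set.ext_iff.1 hset c.1
      simp only [Set.mem_insert_iff, Set.mem_singleton_iff] at h3
      have htr : ∀ (x y : SS), x = y ↔ x.1 = y.1 := fun x y => ⟨congrArg Subtype.val, Subtype.ext⟩
      rw [Set.mem_insert_iff, Set.mem_singleton_iff, Set.mem_insert_iff, Set.mem_singleton_iff,
        htr c a, htr c b, htr c ⟨u₀, hu₀s⟩, htr c ⟨v₀, hv₀s⟩]
      exact h3
  have rule' := IH (n-2) (by omega) G' hcardSS hconn' har'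
  intro a b
  by_cases hab : a = b
  · subst hab; simp
  by_cases haw : a = w
  · refine iff_of_true ?_ ⟨hab, ?_⟩
    · rw [haw]; exact hwdom b (fun hh => hab (by rw [haw, hh]))
    · rw [haw, hw]; have := hdlo b; omega
  by_cases hbw : b = w
  · refine iff_of_true ?_ ⟨hab, ?_⟩
    · rw [hbw]; exact (hwdom a (fun hh => hab (by rw [hbw, hh]))).symm
    · rw [hbw, hw]; have := hdlo a; omega
  by_cases hap : a = p
  · refine iff_of_false ?_ ?_
    · intro hadj
      exact hbw (hpuniq b (by rw [← hap]; exact hadj))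
    · rintro ⟨-, hge⟩
      have := hdeg_le b hbw
      rw [hap, hp] at hge
      omega
  by_cases hbp : b = p
  · refine iff_of_false ?_ ?_
    · intro hadj
      exact haw (hpuniq a (by rw [← hbp]; exact hadj.symm))
    · rintro ⟨-, hge⟩
      have := hdeg_le a haw
      rw [hbp, hp] at hge
      omega
  have has : a ∈ s := (hmem_s a).2 ⟨hap, haw⟩
  have hbs : b ∈ s := (hmem_s b).2 ⟨hbp, hbw⟩
  have hrab := rule' ⟨a, has⟩ ⟨b, hbs⟩
  have e1 := hdeg' ⟨a, has⟩
  have e2 := hdeg' ⟨b, hbs⟩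
  simp only at e1 e2
  constructor
  · intro hadj
    have h1 : G'.Adj ⟨a, has⟩ ⟨b, hbs⟩ := hadj
    obtain ⟨-, hge⟩ := hrab.1 h1
    refine ⟨hab, ?_⟩
    have := hdlo a
    have := hdlo b
    omega
  · rintro ⟨-, hge⟩
    have h1 : G'.Adj ⟨a, has⟩ ⟨b, hbs⟩ := by
      refine hrab.2 ⟨fun h => hab (congrArg Subtype.val h), ?_⟩
      rw [e1, e2]
      have := hdlo a
      have := hdlo b
      omega
    exact h1



set_option linter.unusedSectionVars false

lemma stepid (p q r A B : ℝ) (hq : q ≠ 0) (hr : r ≠ 0) (hp : p = r - q * r ^ 2) (hp0 : p ≠ 0) :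
    (A - B / p) * ((B + (A - B / p) / q) - r * (A - B / p)) =
      (p * A - B) * (r * A - B) / (q * r ^ 2) := by
  subst hp
  have h1 : 1 - r * q ≠ 0 := by
    intro h; apply hp0; linear_combination r * h
  field_simp
  ring

set_option maxHeartbeats 1000000 in
lemma seq_contradiction (μ : ℝ) (m : ℕ) (hm : 1 ≤ m) (a b : ℕ → ℝ)
    (hreg : (0 < μ ∧ μ ≤ (-1 + Real.sqrt 2) / 2) ∨ ((-1 - Real.sqrt 2) / 2 ≤ μ ∧ μ < -1))
    (R1 : ∀ k, 1 ≤ k → k + 1 ≤ m → μ * a k = μ * a (k + 1) - b (k + 1))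
    (R2 : ∀ k, 1 ≤ k → k + 1 ≤ m → (μ + 1) * b k = (μ + 1) * b (k + 1) + a k)
    (seed : a m = b m ∨ (μ + 1) * b m = (μ + 2) * a m)
    (bdy : b 1 = μ * a 1)
    (hnz : a m ≠ 0) : False := by
  have hs2' : Real.sqrt 2 ^ 2 = 2 := Real.sq_sqrt (by norm_num)
  have hs2pos : 1 < Real.sqrt 2 := by nlinarith [Real.sqrt_nonneg 2]
  have hs2lt : Real.sqrt 2 < 3 / 2 := by nlinarith [Real.sqrt_nonneg 2]
  have hμ0 : μ ≠ 0 := by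
    rcases hreg with ⟨h1, _⟩ | ⟨_, h2⟩
    · exact ne_of_gt h1
    · exact ne_of_lt (by linarith)
  have hq0 : μ + 1 ≠ 0 := by
    rcases hreg with ⟨h1, _⟩ | ⟨_, h2⟩
    · intro h; nlinarith
    · intro h; nlinarith
  have ht0 : 0 < μ * (μ + 1) := by
    rcases hreg with ⟨h1, _⟩ | ⟨_, h2⟩
    · nlinarith
    · nlinarith
  have ht14 : μ * (μ + 1) ≤ 1 / 4 := by
    rcases hreg with ⟨h1, h2⟩ | ⟨h1, h2⟩ <;> nlinarith
  obtain ⟨s, hs_def⟩ : ∃ s, s = Real.sqrt (1 - 4 * (μ * (μ + 1))) := ⟨_, rfl⟩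
  have hs0 : 0 ≤ s := hs_def ▸ Real.sqrt_nonneg _
  have hs2 : s ^ 2 = 1 - 4 * (μ * (μ + 1)) := by
    rw [hs_def]; exact Real.sq_sqrt (by linarith)
  have hs1 : s < 1 := by nlinarith [hs2, hs0, ht0]
  obtain ⟨r, hr_def⟩ : ∃ r, r = (1 + s) / (2 * (μ + 1)) := ⟨_, rfl⟩
  have key1 : (μ + 1) * r ^ 2 - r + μ = 0 := by
    have h : (μ + 1) * r ^ 2 - r + μ = (s ^ 2 - (1 - 4 * (μ * (μ + 1)))) / (4 * (μ + 1)) := by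
      rw [hr_def]
      field_simp
      ring
    rw [h, hs2]
    simp
  have hr0 : r ≠ 0 := by
    intro h
    rw [h] at key1
    apply hμ0
    nlinarith [key1]
  have hμeq : μ = r - (μ + 1) * r ^ 2 := by linarith
  have hrq : r * (μ + 1) = (1 + s) / 2 := by
    rw [hr_def]; field_simp
  have hsign : (0 < μ + 1 ∧ μ < r ∧ r < 1) ∨ (μ + 1 < 0 ∧ r < μ ∧ r < 0) := by
    rcases hreg with ⟨h1, h2⟩ | ⟨h1, h2⟩
    · left
      have hq1 : 0 < μ + 1 := by linarith
      have hrpos : 0 < r := by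
        rw [hr_def]; positivity
      refine ⟨hq1, by nlinarith [sq_nonneg r], ?_⟩
      have h3 : r * (μ + 1) < 1 := by rw [hrq]; linarith
      nlinarith
    · right
      have hq1 : μ + 1 < 0 := by linarith
      have hrneg : r < 0 := by
        rw [hr_def]
        apply div_neg_of_pos_of_neg <;> linarith
      exact ⟨hq1, by nlinarith [sq_nonneg r], hrneg⟩
  have hkey2 : r * (μ + 1) < μ + 2 := by
    rcases hreg with ⟨h1, h2⟩ | ⟨h1, h2⟩
    · rw [hrq]; linarith
    · rw [hrq]
      have h23 : 0 < 2 * μ + 3 := by linarith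
      have h25 : 0 < (μ + 1) ^ 2 := by nlinarith
      have h24 : s < 2 * μ + 3 := by nlinarith [hs2, hs0, h23, h25]
      linarith
  have step := fun A B => stepid μ (μ + 1) r A B hq0 hr0 (by linarith) hμ0
  have prodpos : ∀ A B : ℝ,
      (A * (B - r * A) > 0 ∧ μ < r) ∨
      (A * (B - r * A) < 0 ∧ r < μ) ∨ (A * (B - A) ≥ 0 ∧ A ≠ 0 ∧ μ < -1 ∧ r < μ) →
      0 < (μ * A - B) * (r * A - B) := by
    rintro A B (⟨h1, h2⟩ | ⟨h1, h2⟩ | ⟨h1, h2, h3, h4⟩)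
    · have hu : (B - r * A) ≠ 0 := by
        intro h; rw [h] at h1; simp at h1
      nlinarith [sq_nonneg (B - r * A)]
    · have hu : (B - r * A) ≠ 0 := by
        intro h; rw [h] at h1; simp at h1
      nlinarith [sq_nonneg (B - r * A)]
    · have hA2 : 0 < A ^ 2 := by positivity
      nlinarith [sq_nonneg (B - A), mul_nonneg h1 h1]
  -- the invariant
  set Inv : ℝ → ℝ → Prop := fun A B =>
    (0 < μ ∧ A * (B - r * A) > 0) ∨
    (μ < -1 ∧ (A * (B - r * A) < 0 ∨ (A * (B - A) ≥ 0 ∧ A ≠ 0))) with hInv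
  have hseed : Inv (a m) (b m) := by
    rcases hreg with ⟨h1, h2⟩ | ⟨h1, h2⟩
    · left
      refine ⟨h1, ?_⟩
      obtain ⟨hqpos, hpr, hr1'⟩ := hsign.resolve_right (by rintro ⟨h, -⟩; linarith)
      rcases seed with hseed1 | hseed2
      · rw [← hseed1]
        have := hnz
        nlinarith [sq_nonneg (a m), (by positivity : 0 < a m ^ 2)]
      · -- (μ+1) b m = (μ+2) a m ; show a m * (b m - r * a m) > 0
        have h5 : (a m * (b m - r * a m)) * (μ + 1) = a m ^ 2 * ((μ + 2) - r * (μ + 1)) := by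
          linear_combination (a m) * hseed2
        have h6 : 0 < a m ^ 2 * ((μ + 2) - r * (μ + 1)) := by
          have : 0 < a m ^ 2 := by positivity
          nlinarith [hkey2]
        nlinarith
    · right
      refine ⟨h2, ?_⟩
      obtain ⟨hqneg, hrp, hrneg⟩ := hsign.resolve_left (by rintro ⟨h, -⟩; linarith)
      rcases seed with hseed1 | hseed2
      · right
        constructor
        · rw [← hseed1]; simp
        · exact hnz
      · left
        have h5 : (a m * (b m - r * a m)) * (μ + 1) = a m ^ 2 * ((μ + 2) - r * (μ + 1)) := by
          linear_combination (a m) * hseed2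
        have h6 : 0 < a m ^ 2 * ((μ + 2) - r * (μ + 1)) := by
          have : 0 < a m ^ 2 := by positivity
          nlinarith [hkey2]
        nlinarith
  -- preservation
  have hstep : ∀ k, 1 ≤ k → k + 1 ≤ m → Inv (a (k + 1)) (b (k + 1)) → Inv (a k) (b k) := by
    intro k hk1 hk2 hIH
    have hak : a k = a (k + 1) - b (k + 1) / μ := by
      have h := R1 k hk1 hk2
      field_simp
      linarith
    have hbk : b k = b (k + 1) + a k / (μ + 1) := by
      have h := R2 k hk1 hk2
      field_simp
      linarith
    set A := a (k + 1)
    set B := b (k + 1)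
    have hstep1 : a k * (b k - r * a k) = (μ * A - B) * (r * A - B) / ((μ + 1) * r ^ 2) := by
      rw [hak, hbk, hak]
      exact step A B
    rcases hIH with ⟨h1, h2⟩ | ⟨h1, h2⟩
    · left
      refine ⟨h1, ?_⟩
      obtain ⟨hqpos, hpr, hr1'⟩ := hsign.resolve_right (by rintro ⟨h, -⟩; linarith)
      have hp := prodpos A B (Or.inl ⟨h2, hpr⟩)
      rw [hstep1]
      positivity
    · right
      refine ⟨h1, Or.inl ?_⟩
      obtain ⟨hqneg, hrp, hrneg⟩ := hsign.resolve_left (by rintro ⟨h, -⟩; linarith)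
      have hp : 0 < (μ * A - B) * (r * A - B) := by
        rcases h2 with h2 | ⟨h2a, h2b⟩
        · exact prodpos A B (Or.inr (Or.inl ⟨h2, hrp⟩))
        · exact prodpos A B (Or.inr (Or.inr ⟨h2a, h2b, h1, hrp⟩))
      rw [hstep1]
      apply div_neg_of_pos_of_neg hp
      have : 0 < r ^ 2 := by positivity
      nlinarith
  -- downward induction
  have hinv : ∀ d k, k + d = m → 1 ≤ k → Inv (a k) (b k) := by
    intro d
    induction d with
    | zero => intro k hk _; rw [Nat.add_zero] at hk; rw [hk]; exact hseed
    | succ d IH =>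
      intro k hk hk1
      have h1 := IH (k + 1) (by omega) (by omega)
      exact hstep k hk1 (by omega) h1
  have hinv1 : Inv (a 1) (b 1) := hinv (m - 1) 1 (by omega) le_rfl
  -- contradiction with boundary
  rcases hinv1 with ⟨h1, h2⟩ | ⟨h1, h2⟩
  · obtain ⟨hqpos, hpr, hr1'⟩ := hsign.resolve_right (by rintro ⟨h, -⟩; linarith)
    rw [bdy] at h2
    nlinarith [sq_nonneg (a 1)]
  · obtain ⟨hqneg, hrp, hrneg⟩ := hsign.resolve_left (by rintro ⟨h, -⟩; linarith)
    rcases h2 with h2 | ⟨h2a, h2b⟩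
    · rw [bdy] at h2
      nlinarith [sq_nonneg (a 1)]
    · rw [bdy] at h2a
      have : 0 < a 1 ^ 2 := by positivity
      nlinarith
set_option maxHeartbeats 1600000 in
lemma spec_contra {W : Type u} [Fintype W] [DecidableEq W] (G : SimpleGraph W)
    [DecidableRel G.Adj] (hc : G.Connected)
    {u₀ v₀ : W} (hne₀ : u₀ ≠ v₀) (hdeq₀ : G.degree u₀ = G.degree v₀)
    (huniq : ∀ a b : W, a ≠ b → G.degree a = G.degree b → ({a, b} : Set W) = {u₀, v₀})
    (μ : ℝ) (x : W → ℝ) (hx0 : x ≠ 0)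
    (heig : ∀ v, (∑ u ∈ G.neighborFinset v, x u) = μ * x v)
    (hreg : (0 < μ ∧ μ ≤ (-1 + Real.sqrt 2) / 2) ∨ ((-1 - Real.sqrt 2) / 2 ≤ μ ∧ μ < -1)) :
    False := by
  have hs2' : Real.sqrt 2 ^ 2 = 2 := Real.sq_sqrt (by norm_num)
  have hs2pos : 1 < Real.sqrt 2 := by nlinarith [Real.sqrt_nonneg 2]
  have hs2lt : Real.sqrt 2 < 3 / 2 := by nlinarith [Real.sqrt_nonneg 2]
  have hμ0 : μ ≠ 0 := by
    rcases hreg with ⟨h1, _⟩ | ⟨_, h2⟩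
    · exact ne_of_gt h1
    · exact ne_of_lt (by linarith)
  have hq0 : μ + 1 ≠ 0 := by
    rcases hreg with ⟨h1, _⟩ | ⟨_, h2⟩
    · intro h; nlinarith
    · intro h; nlinarith
  set n := Fintype.card W with hn
  have h2 : 2 ≤ n := by
    rw [hn]; exact Fintype.one_lt_card_iff_nontrivial.2 ⟨⟨u₀, v₀, hne₀⟩⟩
  have hdlo : ∀ v, 1 ≤ G.degree v := fun v => degree_pos_of_connected G hc (hn ▸ h2) v
  have hdhi : ∀ v, G.degree v ≤ n - 1 := fun v => by
    have := G.degree_lt_card_verts v; omega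
  have rule := antireg_rule n G hn.symm hc ⟨u₀, v₀, hne₀, hdeq₀, huniq⟩
  have hfib := fiber_cards G hc (hn ▸ h2) hne₀ hdeq₀ huniq
  rw [← hn] at hfib
  obtain ⟨r, hr⟩ : ∃ r, G.degree u₀ = r := ⟨_, rfl⟩
  rw [hr] at hfib
  have hv₀r : G.degree v₀ = r := by rw [← hdeq₀, hr]
  have hr1 : 1 ≤ r := hr ▸ hdlo u₀
  have hr2 : r ≤ n - 1 := hr ▸ hdhi u₀
  -- case n = 2
  by_cases hn2 : n = 2
  · have huniv : (univ : Finset W).erase u₀ = {v₀} := by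
      apply Finset.eq_of_superset_of_card_ge
      · intro c hcm
        rw [mem_singleton] at hcm
        subst hcm
        exact mem_erase.2 ⟨hne₀.symm, mem_univ _⟩
      · rw [card_erase_of_mem (mem_univ _), card_univ, ← hn, hn2, card_singleton]
    have huniv' : (univ : Finset W).erase v₀ = {u₀} := by
      apply Finset.eq_of_superset_of_card_ge
      · intro c hcm
        rw [mem_singleton] at hcm
        subst hcm
        exact mem_erase.2 ⟨hne₀, mem_univ _⟩
      · rw [card_erase_of_mem (mem_univ _), card_univ, ← hn, hn2, card_singleton]
    have hadj : G.Adj u₀ v₀ := by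
      rw [rule]
      refine ⟨hne₀, ?_⟩
      have := hdlo u₀
      have := hdlo v₀
      omega
    have hnbu : G.neighborFinset u₀ = {v₀} := by
      apply Finset.eq_of_superset_of_card_ge
      · intro c hcm
        rw [mem_singleton] at hcm
        subst hcm
        rw [mem_neighborFinset]
        exact hadj
      · rw [card_neighborFinset_eq_degree, card_singleton]
        have := hdhi u₀; omega
    have hnbv : G.neighborFinset v₀ = {u₀} := by
      apply Finset.eq_of_superset_of_card_ge
      · intro c hcm
        rw [mem_singleton] at hcm
        subst hcm
        rw [mem_neighborFinset]
        exact hadj.symm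
      · rw [card_neighborFinset_eq_degree, card_singleton]
        have := hdhi v₀; omega
    have e1 := heig u₀
    have e2 := heig v₀
    rw [hnbu, Finset.sum_singleton] at e1
    rw [hnbv, Finset.sum_singleton] at e2
    -- x v₀ = μ x u₀, x u₀ = μ x v₀
    obtain ⟨z, hz⟩ := Function.ne_iff.1 hx0
    simp only [Pi.zero_apply] at hz
    have hz2 : z = u₀ ∨ z = v₀ := by
      by_contra hcon
      push_neg at hcon
      have : 2 < Fintype.card W := Fintype.two_lt_card_iff.2 ⟨z, u₀, v₀, hcon.1, hcon.2, hne₀⟩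
      omega
    have hzz : x z = μ * (μ * x z) := by
      rcases hz2 with rfl | rfl
      · rw [e1] at e2; exact e2
      · rw [e2] at e1; exact e1
    have hμ2 : μ * μ = 1 := by
      have h5 : (1 - μ * μ) * x z = 0 := by linear_combination hzz
      rcases mul_eq_zero.1 h5 with h | h
      · nlinarith
      · exact absurd h hz
    rcases hreg with ⟨h1, h2'⟩ | ⟨h1, h2'⟩
    · nlinarith
    · nlinarith
  -- now n ≥ 3
  have h3 : 3 ≤ n := by omega
  -- T and master equation
  obtain ⟨T, hT_def⟩ : ∃ T : ℕ → ℝ,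
      T = fun j => ∑ u ∈ univ.filter (fun u => j ≤ G.degree u), x u := ⟨_, rfl⟩
  have hTval : ∀ j, T j = ∑ u ∈ univ.filter (fun u => j ≤ G.degree u), x u := by
    intro j; rw [hT_def]
  have hA : ∀ v, univ.filter (fun u => G.Adj v u) =
      if n ≤ 2 * G.degree v then (univ.filter (fun u => n - G.degree v ≤ G.degree u)).erase v
      else univ.filter (fun u => n - G.degree v ≤ G.degree u) := by
    intro v
    have hdv := hdhi v
    split_ifs with hcase
    · ext u
      simp only [mem_filter, mem_univ, true_and, mem_erase]
      rw [rule v u]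
      constructor
      · rintro ⟨hvu, hge⟩
        exact ⟨fun h => hvu (h.symm), by omega⟩
      · rintro ⟨huv, hge⟩
        exact ⟨fun h => huv h.symm, by omega⟩
    · ext u
      simp only [mem_filter, mem_univ, true_and]
      rw [rule v u]
      constructor
      · rintro ⟨hvu, hge⟩
        omega
      · intro hge
        refine ⟨?_, by omega⟩
        rintro rfl
        omega
  have hmaster : ∀ v, μ * x v = T (n - G.degree v) - (if n ≤ 2 * G.degree v then x v else 0) := by
    intro v
    have h := heig v
    rw [neighborFinset_eq_filter, hA v] at h
    rw [hTval]
    split_ifs at h ⊢ with hcase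
    · have hvmem : v ∈ univ.filter (fun u => n - G.degree v ≤ G.degree u) := by
        simp only [mem_filter, mem_univ, true_and]
        omega
      have hs := Finset.add_sum_erase _ x hvmem
      rw [← h]
      linarith [hs]
    · rw [← h]
      ring
  -- cardinality of upper sets
  have sum_ite_two : ∀ (sf : Finset ℕ),
      (∑ k ∈ sf, (if k = r then (2:ℕ) else 1)) = sf.card + (if r ∈ sf then 1 else 0) := by
    intro sf
    have h1 : ∀ k ∈ sf, (if k = r then (2:ℕ) else 1) = 1 + (if k = r then 1 else 0) := by
      intro k _
      split_ifs <;> rfl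
    rw [Finset.sum_congr rfl h1, Finset.sum_add_distrib, Finset.sum_const, smul_eq_mul, mul_one,
      Finset.sum_ite_eq' sf r (fun _ => 1)]
  have hcardA : ∀ v, (univ.filter (fun u => n - G.degree v ≤ G.degree u)).card
      = G.degree v + (if n - G.degree v ≤ r then 1 else 0) := by
    intro v
    have hmap : ∀ u ∈ univ.filter (fun u => n - G.degree v ≤ G.degree u),
        G.degree u ∈ Icc (n - G.degree v) (n - 1) := by
      intro u hu
      simp only [mem_filter, mem_univ, true_and] at hu
      exact mem_Icc.2 ⟨hu, hdhi u⟩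
    rw [Finset.card_eq_sum_card_fiberwise hmap]
    have hfibeq : ∀ k ∈ Icc (n - G.degree v) (n - 1),
        ((univ.filter (fun u => n - G.degree v ≤ G.degree u)).filter (fun u => G.degree u = k)).card
          = if k = r then 2 else 1 := by
      intro k hk
      rw [mem_Icc] at hk
      have heq : ((univ.filter (fun u => n - G.degree v ≤ G.degree u)).filter
          (fun u => G.degree u = k)) = univ.filter (fun u => G.degree u = k) := by
        ext u
        simp only [mem_filter, mem_univ, true_and]
        constructor
        · rintro ⟨-, h⟩; exact h
        · intro h; exact ⟨by omega, h⟩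
      rw [heq]
      refine hfib k (mem_Icc.2 ⟨?_, hk.2⟩)
      have := hdhi v
      omega
    rw [Finset.sum_congr rfl hfibeq]
    rw [sum_ite_two, Nat.card_Icc]
    simp only [mem_Icc]
    have hdv1 := hdlo v
    have hdv2 := hdhi v
    have hc1 : (n - 1 + 1 - (n - G.degree v)) = G.degree v := by omega
    rw [hc1]
    congr 1
    by_cases hcc : n - G.degree v ≤ r
    · rw [if_pos hcc, if_pos ⟨hcc, hr2⟩]
    · rw [if_neg hcc, if_neg (fun hcon => hcc hcon.1)]
  have hcount : ∀ v, ((n ≤ 2 * G.degree v) ↔ (n - G.degree v ≤ r)) := by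
    intro v
    have hdv : G.degree v = (univ.filter (fun u => G.Adj v u)).card := by
      rw [← neighborFinset_eq_filter, card_neighborFinset_eq_degree]
    rw [hA v] at hdv
    by_cases hcase : n ≤ 2 * G.degree v
    · rw [if_pos hcase] at hdv
      have hvmem : v ∈ univ.filter (fun u => n - G.degree v ≤ G.degree u) := by
        simp only [mem_filter, mem_univ, true_and]
        omega
      rw [card_erase_of_mem hvmem, hcardA v] at hdv
      by_cases h2c : n - G.degree v ≤ r
      · exact iff_of_true hcase h2c
      · rw [if_neg h2c] at hdv
        have := hdlo v
        omega
    · rw [if_neg hcase] at hdv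
      rw [hcardA v] at hdv
      by_cases h2c : n - G.degree v ≤ r
      · rw [if_pos h2c] at hdv
        omega
      · exact iff_of_false hcase h2c
  -- picking vertices of each degree
  have hpick : ∀ k, 1 ≤ k → k ≤ n - 1 → ∃ v, G.degree v = k := by
    intro k hk1 hk2
    have h := hfib k (mem_Icc.2 ⟨hk1, hk2⟩)
    have hpos : 0 < (univ.filter (fun v => G.degree v = k)).card := by
      rw [h]; split <;> omega
    obtain ⟨v, hv⟩ := card_pos.1 hpos
    exact ⟨v, (mem_filter.1 hv).2⟩
  -- r = n / 2
  have hrval : r = n / 2 := by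
    obtain ⟨w₁, hw₁⟩ := hpick (n - n / 2) (by omega) (by omega)
    obtain ⟨w₂, hw₂⟩ := hpick (n - n / 2 - 1) (by omega) (by omega)
    have hc1 := (hcount w₁).1 (by omega)
    have hc2 := fun h => (hcount w₂).2 h
    rw [hw₁] at hc1
    have hc2' : ¬ (n - G.degree w₂ ≤ r) := by
      intro h
      have := (hcount w₂).2 h
      omega
    rw [hw₂] at hc2'
    omega
  -- twin equality
  have htwin : ∀ u v, G.degree u = G.degree v → x u = x v := by
    intro u v hduv
    have h1 := hmaster u
    have h2 := hmaster v
    rw [hduv] at h1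
    split_ifs at h1 h2 with hcase
    · have h5 : (μ + 1) * x u = (μ + 1) * x v := by linarith
      exact mul_left_cancel₀ hq0 h5
    · have h5 : μ * x u = μ * x v := by linarith
      exact mul_left_cancel₀ hμ0 h5
  obtain ⟨y, hy_def⟩ : ∃ y : ℕ → ℝ,
      y = fun k => ∑ v ∈ univ.filter (fun v => G.degree v = k), x v := ⟨_, rfl⟩
  have hyval : ∀ k, y k = ∑ v ∈ univ.filter (fun v => G.degree v = k), x v := by
    intro k; rw [hy_def]
  have hTstep : ∀ j, T j = y j + T (j + 1) := by
    intro j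
    rw [hTval, hTval, hyval]
    rw [← Finset.sum_filter_add_sum_filter_not (univ.filter (fun u => j ≤ G.degree u))
      (fun u => G.degree u = j)]
    congr 1
    · apply Finset.sum_congr _ (fun _ _ => rfl)
      ext u
      simp only [mem_filter, mem_univ, true_and]
      constructor
      · rintro ⟨-, h⟩; exact h
      · intro h; exact ⟨by omega, h⟩
    · apply Finset.sum_congr _ (fun _ _ => rfl)
      ext u
      simp only [mem_filter, mem_univ, true_and]
      omega
  have hTn : T n = 0 := by
    rw [hTval]
    rw [Finset.filter_false_of_mem, Finset.sum_empty]
    intro u _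
    have := hdhi u
    omega
  have hfibsingle : ∀ k, 1 ≤ k → k ≤ n - 1 → k ≠ r → ∃ v, G.degree v = k ∧ y k = x v := by
    intro k h1 h2' h3'
    have h := hfib k (mem_Icc.2 ⟨h1, h2'⟩)
    rw [if_neg h3'] at h
    obtain ⟨v, hv⟩ := card_eq_one.1 h
    refine ⟨v, ?_, ?_⟩
    · have hmem : v ∈ univ.filter (fun v => G.degree v = k) := by
        rw [hv]; exact mem_singleton_self v
      exact (mem_filter.1 hmem).2
    · rw [hyval, hv, Finset.sum_singleton]
  have hclass : ∀ k, 1 ≤ k → k ≤ n - 1 → k ≠ r →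
      (μ + (if n ≤ 2 * k then 1 else 0)) * y k = T (n - k) := by
    intro k h1 h2' h3'
    obtain ⟨v, hdv, hyv⟩ := hfibsingle k h1 h2' h3'
    have hmv := hmaster v
    rw [hdv] at hmv
    rw [hyv]
    split_ifs at hmv ⊢ with hcase
    · linarith
    · linarith
  have hfibr : univ.filter (fun v => G.degree v = r) = {u₀, v₀} := by
    have h := hfib r (mem_Icc.2 ⟨hr1, hr2⟩)
    rw [if_pos rfl] at h
    have hsub : ({u₀, v₀} : Finset W) ⊆ univ.filter (fun v => G.degree v = r) := by
      intro c hcm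
      rw [mem_insert, mem_singleton] at hcm
      rcases hcm with rfl | rfl
      · exact mem_filter.2 ⟨mem_univ _, hr⟩
      · exact mem_filter.2 ⟨mem_univ _, hv₀r⟩
    exact (Finset.eq_of_subset_of_card_le hsub (by rw [h, card_pair hne₀])).symm
  have hyr : y r = 2 * x u₀ := by
    rw [hyval, hfibr, Finset.sum_pair hne₀, htwin v₀ u₀ (by rw [hv₀r, hr])]
    ring
  have hclassr : (μ + (if n ≤ 2 * r then 1 else 0)) * y r = 2 * T (n - r) := by
    have hmv := hmaster u₀
    rw [hr] at hmv
    rw [hyr]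
    split_ifs at hmv ⊢ with hcase
    · linarith
    · linarith
  -- the two sequences
  obtain ⟨a, ha_def⟩ : ∃ a : ℕ → ℝ, a = fun k => if k = r then y r / 2 else y k := ⟨_, rfl⟩
  obtain ⟨b, hb_def⟩ : ∃ b : ℕ → ℝ,
      b = fun k => if k = r ∧ n = 2 * r then y r / 2 else y (n - k) := ⟨_, rfl⟩
  have haval : ∀ k, a k = if k = r then y r / 2 else y k := by intro k; rw [ha_def]
  have hbval : ∀ k, b k = if k = r ∧ n = 2 * r then y r / 2 else y (n - k) := by
    intro k; rw [hb_def]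
  have har_eq : a r = y r / 2 := by rw [haval]; simp
  have hbr_even : n = 2 * r → b r = y r / 2 := by
    intro he; rw [hbval]; simp [he]
  have hbr_odd : n = 2 * r + 1 → b r = y (r + 1) := by
    intro ho; rw [hbval, if_neg (by omega)]
    congr 1
    omega
  have hak_lt : ∀ k, k < r → a k = y k := by
    intro k hk; rw [haval, if_neg (by omega)]
  have hbk_lt : ∀ k, k < r → b k = y (n - k) := by
    intro k hk; rw [hbval, if_neg (by omega)]
  have hpar : n = 2 * r ∨ n = 2 * r + 1 := by omega
  -- L2 : T k = (μ+1) * b k for 1 ≤ k ≤ r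
  have hLem2 : ∀ k, 1 ≤ k → k ≤ r → T k = (μ + 1) * b k := by
    intro k h1k hkr
    rcases eq_or_lt_of_le hkr with heq | hlt
    · subst heq
      rcases hpar with he | ho
      · have hcr := hclassr
        rw [if_pos (by omega)] at hcr
        have hnr : n - k = k := by omega
        rw [hnr] at hcr
        rw [hbr_even he]
        linarith
      · have hcl := hclass (k + 1) (by omega) (by omega) (by omega)
        rw [if_pos (by omega)] at hcl
        have h1 : n - (k + 1) = k := by omega
        rw [h1] at hcl
        rw [hbr_odd ho]
        linarith
    · have hcl := hclass (n - k) (by omega) (by omega) (by omega)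
      rw [if_pos (by omega)] at hcl
      have h1 : n - (n - k) = k := by omega
      rw [h1] at hcl
      rw [hbk_lt k hlt]
      linarith
  -- middle relations
  have hMid : T (n - r) = μ * a r + (if n = 2 * r then b r else 0) := by
    rcases hpar with he | ho
    · rw [if_pos he]
      have h1 := hLem2 r hr1 le_rfl
      have hnr : n - r = r := by omega
      rw [hnr, h1, har_eq, hbr_even he]
      ring
    · rw [if_neg (by omega)]
      have hcr := hclassr
      rw [if_neg (by omega)] at hcr
      rw [har_eq]
      linarith
  have hTmid : T (n - r) - y (n - r) = μ * a r - b r := by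
    rcases hpar with he | ho
    · have h4 : n - r = r := by omega
      rw [hMid, if_pos he, h4]
      have h5 : y r = 2 * b r := by rw [hbr_even he]; ring
      linarith
    · have h4 : n - r = r + 1 := by omega
      rw [hMid, if_neg (by omega), h4]
      have h5 : y (r + 1) = b r := (hbr_odd ho).symm
      linarith
  -- recurrences
  have R1 : ∀ k, 1 ≤ k → k + 1 ≤ r → μ * a k = μ * a (k + 1) - b (k + 1) := by
    intro k hk1 hk2
    have hclk := hclass k hk1 (by omega) (by omega)
    rw [if_neg (by omega)] at hclk
    have hTs := hTstep (n - (k + 1))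
    have h1 : n - (k + 1) + 1 = n - k := by omega
    rw [h1] at hTs
    rw [hak_lt k (by omega)]
    rcases eq_or_lt_of_le hk2 with heq | hlt
    · rw [heq] at hTs ⊢
      linarith [hTmid]
    · have hclk1 := hclass (k + 1) (by omega) (by omega) (by omega)
      rw [if_neg (by omega)] at hclk1
      rw [hak_lt (k + 1) hlt, hbk_lt (k + 1) hlt]
      linarith
  have R2 : ∀ k, 1 ≤ k → k + 1 ≤ r → (μ + 1) * b k = (μ + 1) * b (k + 1) + a k := by
    intro k hk1 hk2
    have h1 := hLem2 k hk1 (by omega)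
    have h2' := hLem2 (k + 1) (by omega) hk2
    have h3' := hTstep k
    rw [hak_lt k (by omega)]
    linarith
  -- seed
  have hseed : a r = b r ∨ (μ + 1) * b r = (μ + 2) * a r := by
    rcases hpar with he | ho
    · left
      rw [har_eq, hbr_even he]
    · right
      have h1 := hLem2 r hr1 le_rfl
      have h2' := hTstep r
      have h4 := hMid
      rw [if_neg (by omega)] at h4
      have h5 : n - r = r + 1 := by omega
      rw [h5] at h4
      rw [har_eq] at h4 ⊢
      linarith
  -- boundary
  have hbdy : b 1 = μ * a 1 := by
    have hT1 : T (n - 1) = y (n - 1) := by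
      have h6 := hTstep (n - 1)
      have h1 : n - 1 + 1 = n := by omega
      rw [h1, hTn] at h6
      linarith
    rcases eq_or_lt_of_le hr1 with h1r | h1r
    · have h4 := hclassr
      rw [if_neg (by omega)] at h4
      have h5 : n - r = n - 1 := by omega
      rw [h5, hT1] at h4
      have hb1 : b 1 = y (n - 1) := by rw [hbval, if_neg (by omega)]
      have ha1 : a 1 = y r / 2 := by rw [← h1r] at har_eq ⊢; exact har_eq
      rw [hb1, ha1]
      linarith
    · have hcl := hclass 1 le_rfl (by omega) (by omega)
      rw [if_neg (by omega)] at hcl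
      rw [hT1] at hcl
      have hb1 : b 1 = y (n - 1) := hbk_lt 1 h1r
      have ha1 : a 1 = y 1 := hak_lt 1 h1r
      rw [hb1, ha1]
      linarith
  -- nondegeneracy
  have hnz : a r ≠ 0 := by
    intro haz
    have hbz : b r = 0 := by
      rcases hseed with h | h
      · rw [← h, haz]
      · have h0 : (μ + 1) * b r = 0 := by rw [h, haz]; ring
        rcases mul_eq_zero.1 h0 with h' | h'
        · exact absurd h' hq0
        · exact h'
    have hzero : ∀ d k, k + d = r → 1 ≤ k → a k = 0 ∧ b k = 0 := by
      intro d
      induction d with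
      | zero =>
        intro k hk _
        rw [Nat.add_zero] at hk
        subst hk
        exact ⟨haz, hbz⟩
      | succ d IH =>
        intro k hk hk1
        obtain ⟨hA, hB⟩ := IH (k + 1) (by omega) (by omega)
        have h1 := R1 k hk1 (by omega)
        rw [hA, hB] at h1
        have hA0 : a k = 0 := by
          have h6 : μ * a k = 0 := by rw [h1]; ring
          rcases mul_eq_zero.1 h6 with h | h
          · exact absurd h hμ0
          · exact h
        refine ⟨hA0, ?_⟩
        have h2' := R2 k hk1 (by omega)
        rw [hB, hA0] at h2'
        have h6 : (μ + 1) * b k = 0 := by rw [h2']; ring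
        rcases mul_eq_zero.1 h6 with h | h
        · exact absurd h hq0
        · exact h
    have hyzero : ∀ k, 1 ≤ k → k ≤ n - 1 → y k = 0 := by
      intro k h1k h2k
      rcases le_or_gt k r with hkr | hkr
      · obtain ⟨hA, hB⟩ := hzero (r - k) k (by omega) h1k
        by_cases hkr2 : k = r
        · subst hkr2
          rw [har_eq] at hA
          linarith
        · rw [hak_lt k (by omega)] at hA
          exact hA
      · obtain ⟨hA, hB⟩ := hzero (r - (n - k)) (n - k) (by omega) (by omega)
        have hbnk : b (n - k) = y (n - (n - k)) := by
          rw [hbval, if_neg (by omega)]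
        have h5 : n - (n - k) = k := by omega
        rw [h5] at hbnk
        rw [← hbnk]
        exact hB
    have hxz : ∀ v, x v = 0 := by
      intro v
      by_cases hvr : G.degree v = r
      · have h6 : x v = x u₀ := htwin v u₀ (by rw [hvr, hr])
        have h7 := hyzero r hr1 hr2
        rw [hyr] at h7
        rw [h6]
        linarith
      · obtain ⟨v', hdv', hyv'⟩ := hfibsingle (G.degree v) (hdlo v) (hdhi v) hvr
        have h6 : x v = x v' := htwin v v' (by rw [hdv'])
        have h7 := hyzero (G.degree v) (hdlo v) (hdhi v)
        rw [hyv'] at h7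
        rw [h6, h7]
    apply hx0
    funext v
    exact hxz v
  exact seq_contradiction μ r hr1 a b hreg R1 R2 hseed hbdy hnz

end AntiRegularAux

theorem antiRegular_connected_eigenvalue_bounds {V : Type*} [Fintype V]
    (A : SimpleGraph V) (hcard : 2 ≤ Fintype.card V)
    (hconn : A.Connected) (har : A.IsAntiRegular) (μ : ℝ) (hμ : A.HasAdjEigenvalue μ) :
    (μ < -1 → μ < (-1 - Real.sqrt 2) / 2) ∧ (0 < μ → (-1 + Real.sqrt 2) / 2 < μ) := by
  letI := Classical.decEq V
  letI : DecidableRel A.Adj := Classical.decRel _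
  obtain ⟨x, hx0, hxe⟩ := hμ
  obtain ⟨-, u₀, v₀, hne₀, hdeq₀, huniq⟩ := har
  have heig : ∀ v, (∑ u ∈ A.neighborFinset v, x u) = μ * x v := by
    intro v
    have h := congrFun hxe v
    rwa [SimpleGraph.adjMatrix_mulVec_apply, Pi.smul_apply, smul_eq_mul] at h
  constructor
  · intro h1
    by_contra h2
    push_neg at h2
    exact AntiRegularAux.spec_contra A hconn hne₀ hdeq₀ huniq μ x hx0 heig (Or.inr ⟨h2, h1⟩)
  · intro h1
    by_contra h2
    push_neg at h2
    exact AntiRegularAux.spec_contra A hconn hne₀ hdeq₀ huniq μ x hx0 heig (Or.inl ⟨h1, h2⟩)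
end
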